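/- arXiv:0909.3520 — 3 statements merged into one kernel-verified Lean document; each statement's English description precedes it below -/
import Mathlib

section
/- A k-peg Hanoi group G generated by S is contracting if and only if S satisfies condition (*). -/
/-!
Common framework: automorphisms of the rooted tree `X_k^*`, root permutations,
sections, self-similar and contracting groups, Hanoi automorphisms and Hanoi
groups, following Makisumi–Stadnyk–Steinhurst, "Modified Hanoi Towers Groups
and Limit Spaces".

A word `x_n … x_1` over the alphabet `X_k = Fin k` is encoded as the list
`[x_n, …, x_1]`, whose head `x_n` is the first letter, i.e. the letter that a
tree automorphism reads (and permutes) first.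
-/

namespace Hanoi

/-- Words over the alphabet `X_k = Fin k`. -/
abbrev Word (k : ℕ) := List (Fin k)

/-- `e` is an automorphism of the rooted tree `X_k^*`: it fixes the root
(the empty word), preserves word length (levels) and preserves the tree
structure (words sharing an initial segment of length `n` are sent to words
sharing an initial segment of length `n`). -/
def IsTreeAut {k : ℕ} (e : Equiv.Perm (Word k)) : Prop :=
  (∀ w : Word k, (e w).length = w.length) ∧
    ∀ (w v : Word k) (n : ℕ), w.take n = v.take n → (e w).take n = (e v).take n

open Classical in
/-- The root permutation `σ_e` of a tree automorphism `e` (its action on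
one-letter words). -/
noncomputable def rootPerm {k : ℕ} (e : Equiv.Perm (Word k)) : Equiv.Perm (Fin k) :=
  if h : Function.Bijective (fun x : Fin k => ((e [x]).head?.getD x)) then
    Equiv.ofBijective _ h
  else 1

open Classical in
/-- The section `e|_x` of `e` at a letter `x`: the unique automorphism with
`e (x :: w) = σ_e x :: (e|_x) w` for all words `w`. -/
noncomputable def sec {k : ℕ} (e : Equiv.Perm (Word k)) (x : Fin k) : Equiv.Perm (Word k) :=
  if h : Function.Bijective (fun w : Word k => (e (x :: w)).tail) then
    Equiv.ofBijective _ h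
  else 1

/-- The section `e|_v` of `e` at a word `v = x_n … x_1`, defined by
`e|_v = (e|_{x_n})|_{x_{n-1} … x_1}`. -/
noncomputable def secW {k : ℕ} (e : Equiv.Perm (Word k)) : Word k → Equiv.Perm (Word k)
  | [] => e
  | x :: v => secW (sec e x) v

/-- A subgroup of the permutations of `X_k^*` is self-similar if it consists of
tree automorphisms and is closed under taking sections. -/
def IsSelfSimilar {k : ℕ} (G : Subgroup (Equiv.Perm (Word k))) : Prop :=
  (∀ g ∈ G, IsTreeAut g) ∧ ∀ g ∈ G, ∀ x : Fin k, sec g x ∈ G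

/-- A self-similar group `G` is contracting if there is a finite subset `N ⊆ G`
such that for every `g ∈ G` all sections of `g` at words of length at least
some `m` lie in `N`. -/
def IsContracting {k : ℕ} (G : Subgroup (Equiv.Perm (Word k))) : Prop :=
  ∃ N : Set (Equiv.Perm (Word k)), N.Finite ∧ N ⊆ (G : Set (Equiv.Perm (Word k))) ∧
    ∀ g ∈ G, ∃ m : ℕ, ∀ v : Word k, m ≤ v.length → secW g v ∈ N

/-- `N` is the nucleus of `G`: a smallest finite subset of `G` catching all
deep enough sections of every element of `G`. -/
def IsNucleus {k : ℕ} (G : Subgroup (Equiv.Perm (Word k)))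
    (N : Set (Equiv.Perm (Word k))) : Prop :=
  (N.Finite ∧ N ⊆ (G : Set (Equiv.Perm (Word k))) ∧
    ∀ g ∈ G, ∃ m : ℕ, ∀ v : Word k, m ≤ v.length → secW g v ∈ N) ∧
  ∀ N' : Set (Equiv.Perm (Word k)), N'.Finite → N' ⊆ (G : Set (Equiv.Perm (Word k))) →
    (∀ g ∈ G, ∃ m : ℕ, ∀ v : Word k, m ≤ v.length → secW g v ∈ N') → N ⊆ N'

/-- `a` is a Hanoi automorphism with set of inactive pegs `Q`: the section at
each active peg (element of the complement of `Q`) is trivial, the section at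
each inactive peg is `a` itself, and the root permutation fixes each inactive
peg. -/
def IsHanoiWith {k : ℕ} (a : Equiv.Perm (Word k)) (Q : Set (Fin k)) : Prop :=
  IsTreeAut a ∧ (∀ i ∉ Q, sec a i = 1) ∧ (∀ j ∈ Q, sec a j = a) ∧
    ∀ j ∈ Q, rootPerm a j = j

/-- `a` is a `k`-peg Hanoi automorphism. -/
def IsHanoiAut {k : ℕ} (a : Equiv.Perm (Word k)) : Prop := ∃ Q, IsHanoiWith a Q

open Classical in
/-- The set `Q_a` of inactive pegs of a Hanoi automorphism `a`; by convention
`Q_1 = X_k` (for `a ≠ 1` the set of inactive pegs is uniquely determined). -/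
noncomputable def inactivePegs {k : ℕ} (a : Equiv.Perm (Word k)) : Set (Fin k) :=
  if a = 1 then Set.univ
  else if h : ∃ Q, IsHanoiWith a Q then h.choose else ∅

/-- `S_{k,q}`: the set of Hanoi automorphisms over `X_k` with exactly `q`
inactive pegs. -/
noncomputable def hanoiSet (k q : ℕ) : Set (Equiv.Perm (Word k)) :=
  {a | IsHanoiAut a ∧ (inactivePegs a).ncard = q}

/-- `L = [s_n, …, s_1]` is a representation of `g` over the generating set `S`:
each `s_i ∈ S ∪ S⁻¹` and `g = s_n ⋯ s_2 s_1`. -/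
def IsRepOf {k : ℕ} (S : Set (Equiv.Perm (Word k))) (L : List (Equiv.Perm (Word k)))
    (g : Equiv.Perm (Word k)) : Prop :=
  (∀ s ∈ L, s ∈ S ∨ s⁻¹ ∈ S) ∧ L.prod = g

/-- The length `l(g)` of `g` with respect to `S`: the length of a minimal
representation (`0` for the identity). -/
noncomputable def repLength {k : ℕ} (S : Set (Equiv.Perm (Word k)))
    (g : Equiv.Perm (Word k)) : ℕ :=
  sInf {n | ∃ L, IsRepOf S L g ∧ L.length = n}

/-- The essential set of a representation: the intersection of the sets of
inactive pegs of its letters. -/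
noncomputable def essSet {k : ℕ} (L : List (Equiv.Perm (Word k))) : Set (Fin k) :=
  ⋂ s ∈ L, inactivePegs s

/-- The prenucleus of `G`: the set of elements `g ∈ G` with `g|_j = g` for some
letter `j`. -/
noncomputable def preNucleus {k : ℕ} (G : Subgroup (Equiv.Perm (Word k))) :
    Set (Equiv.Perm (Word k)) :=
  {g | g ∈ G ∧ ∃ j : Fin k, sec g j = g}

/-- The underlying function of the Hanoi Towers move `a_{ij}`: it changes the
first occurrence of `i` or `j` in a word by means of the transposition `(i j)`
and leaves the rest of the word unchanged. -/
def hanoiMoveFun {k : ℕ} (i j : Fin k) : Word k → Word k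
  | [] => []
  | x :: w => if x = i ∨ x = j then Equiv.swap i j x :: w else x :: hanoiMoveFun i j w

theorem hanoiMoveFun_involutive {k : ℕ} (i j : Fin k) :
    Function.Involutive (hanoiMoveFun i j) := by
  intro w
  induction w with
  | nil => rfl
  | cons x t ih =>
    by_cases h : x = i ∨ x = j
    · have h2 : Equiv.swap i j x = i ∨ Equiv.swap i j x = j := by
        rcases h with h | h <;> subst h <;> simp
      simp only [hanoiMoveFun, if_pos h, if_pos h2, Equiv.swap_apply_self]
    · simp only [hanoiMoveFun, if_neg h, ih]

/-- The Hanoi Towers move `a_{ij}`, as a permutation of `X_k^*`: its root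
permutation is the transposition `(i j)`, its sections at `i` and `j` are
trivial and all its other sections equal `a_{ij}` itself. -/
def hanoiMove {k : ℕ} (i j : Fin k) : Equiv.Perm (Word k) :=
  (hanoiMoveFun_involutive i j).toPerm

/-- The orbit of the letter `j` under the subgroup of `Sym(X_k)` generated by
the root permutations of the elements of `T`. -/
noncomputable def orbT {k : ℕ} (T : Finset (Equiv.Perm (Word k))) (j : Fin k) : Set (Fin k) :=
  MulAction.orbit (Subgroup.closure ((fun a => rootPerm a) '' (T : Set (Equiv.Perm (Word k))))) j

/-- The set `Fix(T)` of letters fixed by the root permutation of every element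
of `T`. -/
noncomputable def fixT {k : ℕ} (T : Finset (Equiv.Perm (Word k))) : Set (Fin k) :=
  {x | ∀ s ∈ T, rootPerm s x = x}

/-- Condition (*) on a generating set `S` of Hanoi automorphisms: for every
finite `T ⊆ S` with nonempty essential set and every letter `j ∉ Fix(T)`,
the orbit of `j` misses the inactive pegs of some element of `T`. -/
noncomputable def CondStar {k : ℕ} (S : Set (Equiv.Perm (Word k))) : Prop :=
  ∀ T : Finset (Equiv.Perm (Word k)), (T : Set (Equiv.Perm (Word k))) ⊆ S →
    (⋂ s ∈ T, inactivePegs s).Nonempty →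
    ∀ j : Fin k, j ∉ fixT T →
      ∃ s ∈ T, orbT T j ∩ inactivePegs s = ∅

open Classical in
/-- `d(g)`: the least number of distinct generators occurring among all
representations of `g` having nonempty essential set. -/
noncomputable def dCount {k : ℕ} (S : Set (Equiv.Perm (Word k)))
    (g : Equiv.Perm (Word k)) : ℕ :=
  sInf {M | ∃ L, IsRepOf S L g ∧ (essSet L).Nonempty ∧ L.toFinset.card = M}

/-- `S` is fully symmetric: for every non-identity `a ∈ S` and every
`φ ∈ Sym(X_k)`, the Hanoi automorphism `φ·a` with inactive pegs `φ(Q_a)` and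
root permutation `φ ∘ σ_a ∘ φ⁻¹` again lies in `S`. -/
noncomputable def FullySymmetric {k : ℕ} (S : Set (Equiv.Perm (Word k))) : Prop :=
  ∀ a ∈ S, a ≠ 1 → ∀ φ : Equiv.Perm (Fin k), ∀ b : Equiv.Perm (Word k),
    IsHanoiWith b (φ '' inactivePegs a) →
    rootPerm b = φ * rootPerm a * φ⁻¹ → b ∈ S

/-- The family `R̲_{k,n}`: the identity together with all Hanoi automorphisms
`a` such that (1) `Q_a ⊆ {m+1, …, m+n}` for some `m`, and (2) whenever
`i ∈ Q_a` the root permutation of `a` fixes `i-1, …, i-(n-1)`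
(all peg labels mod `k`). -/
noncomputable def Runder (k n : ℕ) : Set (Equiv.Perm (Word k)) :=
  {a | a = 1 ∨ (IsHanoiAut a ∧
    (∃ m : Fin k, ∀ q ∈ inactivePegs a, ∃ t : ℕ, 1 ≤ t ∧ t ≤ n ∧
      (q : ℕ) = ((m : ℕ) + t) % k) ∧
    ∀ i ∈ inactivePegs a, ∀ x : Fin k, ∀ t : ℕ, 1 ≤ t → t ≤ n - 1 →
      ((x : ℕ) + t) % k = (i : ℕ) → rootPerm a x = x)}

/-- The family `R̄_{k,n}`: the identity together with all Hanoi automorphisms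
`a` such that (1) `Q_a ⊆ {m+1, …, m+n}` for some `m`, and (2) whenever
`i ∈ Q_a` the root permutation of `a` fixes `i+1, …, i+(n-1)`
(all peg labels mod `k`). -/
noncomputable def Rover (k n : ℕ) : Set (Equiv.Perm (Word k)) :=
  {a | a = 1 ∨ (IsHanoiAut a ∧
    (∃ m : Fin k, ∀ q ∈ inactivePegs a, ∃ t : ℕ, 1 ≤ t ∧ t ≤ n ∧
      (q : ℕ) = ((m : ℕ) + t) % k) ∧
    ∀ i ∈ inactivePegs a, ∀ x : Fin k, ∀ t : ℕ, 1 ≤ t → t ≤ n - 1 →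
      (x : ℕ) = ((i : ℕ) + t) % k → rootPerm a x = x)}

/-- The finite word `x_m … x_1` (first letter `x_m`) read off from a
left-infinite sequence `… x_2 x_1`, encoded as `x : ℕ → Fin k` with
`x s = x_{s+1}`. -/
def wordOf {k : ℕ} (x : ℕ → Fin k) (m : ℕ) : Word k := (List.range m).reverse.map x


/-!
Sections of a product of Hanoi automorphisms at a letter are products of a sublist of its
letters, and this sublist is strictly shorter unless all letters share an inactive peg. Hence
the deep sections of every element lie in subgroups `⟨U⟩` with `U ⊆ S` of nonempty essential
set. Under (*) each such `⟨U⟩` is finite, by induction on `U`: an element of `⟨U⟩` is its own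
section at the essential pegs, so it is determined by its root permutation and its sections at
the other letters `x`; these lie in `⟨U'⟩` for the proper subset `U'` of generators having an
inactive peg in the orbit of `x`, and (*) is exactly what makes `U'` proper.

Conversely, if (*) fails for `T` with common inactive peg `q` at a letter `j`, then every
element of `⟨T⟩` is its own section at `q`, so `⟨T⟩` lies in the finite set `N` witnessing
contraction. But every generator has an inactive peg in the orbit of `j`, which lets one move
between letters of that orbit with trivial sections; so `⟨T⟩` acts transitively on the words over
the orbit of `j`, which has at least two letters, and `⟨T⟩` is infinite.
-/

variable {k : ℕ}

namespace IsTreeAut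

variable {e g h : Equiv.Perm (Word k)}

lemma one : IsTreeAut (1 : Equiv.Perm (Word k)) :=
  ⟨fun _ => rfl, fun _ _ _ h => h⟩

lemma of_apply_take (hlen : ∀ w, (e w).length = w.length)
    (htake : ∀ (w : Word k) (n : ℕ), e (w.take n) = (e w).take n) : IsTreeAut e :=
  ⟨hlen, fun w v n h => by rw [← htake, ← htake, h]⟩

lemma apply_take (he : IsTreeAut e) (w : Word k) (n : ℕ) : e (w.take n) = (e w).take n :=
  calc e (w.take n) = (e (w.take n)).take n := (List.take_of_length_le (by rw [he.1]; simp)).symm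
    _ = (e w).take n := he.2 _ _ _ (by simp)

lemma apply_nil (he : IsTreeAut e) : e [] = [] :=
  List.length_eq_zero_iff.mp (he.1 [])

lemma mul (hg : IsTreeAut g) (hh : IsTreeAut h) : IsTreeAut (g * h) :=
  of_apply_take (fun w => by simp only [Equiv.Perm.mul_apply, hg.1, hh.1])
    (fun w n => by simp only [Equiv.Perm.mul_apply, hh.apply_take, hg.apply_take])

lemma inv (hg : IsTreeAut g) : IsTreeAut g⁻¹ := by
  refine of_apply_take (fun w => ?_) (fun w n => g.injective ?_)
  · simpa using (hg.1 (g⁻¹ w)).symm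
  · simp [hg.apply_take]

lemma of_mem_closure {U : Set (Equiv.Perm (Word k))} (hU : ∀ a ∈ U, IsTreeAut a)
    (hg : g ∈ Subgroup.closure U) : IsTreeAut g :=
  Subgroup.closure_induction hU one (fun _ _ _ _ hx hy => hx.mul hy) (fun _ _ hx => hx.inv) hg

lemma apply_singleton (he : IsTreeAut e) (x : Fin k) :
    e [x] = [(e [x]).head?.getD x] := by
  obtain ⟨a, ha⟩ := List.length_eq_one_iff.mp (he.1 [x])
  simp [ha]

lemma rootPerm_apply (he : IsTreeAut e) (x : Fin k) : rootPerm e x = (e [x]).head?.getD x := by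
  have hinj : Function.Injective fun x : Fin k => (e [x]).head?.getD x := fun x y hxy => by
    have : e [x] = e [y] := by
      rw [he.apply_singleton x, he.apply_singleton y]; exact congrArg ([·]) hxy
    simpa using e.injective this
  rw [rootPerm, dif_pos (Finite.injective_iff_bijective.mp hinj)]
  rfl

lemma apply_cons_eq_rootPerm_cons_tail (he : IsTreeAut e) (x : Fin k) (w : Word k) :
    e (x :: w) = rootPerm e x :: (e (x :: w)).tail := by
  have htake : (e (x :: w)).take 1 = [rootPerm e x] := by
    rw [← he.apply_take, List.take_succ_cons, List.take_zero, he.apply_singleton,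
      he.rootPerm_apply]
  obtain ⟨a, t, hat⟩ := List.exists_cons_of_length_eq_add_one (he.1 (x :: w))
  simp_all

lemma sec_apply (he : IsTreeAut e) (x : Fin k) (w : Word k) :
    sec e x w = (e (x :: w)).tail := by
  have hinj : Function.Injective fun w : Word k => (e (x :: w)).tail := fun w w' hww => by
    have : e (x :: w) = e (x :: w') := by
      rw [he.apply_cons_eq_rootPerm_cons_tail x w, he.apply_cons_eq_rootPerm_cons_tail x w']
      exact congrArg _ hww
    simpa using e.injective this
  have hsurj : Function.Surjective fun w : Word k => (e (x :: w)).tail := fun u => by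
    obtain ⟨z, w, hzw⟩ : ∃ z w, e⁻¹ (rootPerm e x :: u) = z :: w :=
      List.exists_cons_of_length_eq_add_one (by simpa using he.inv.1 (rootPerm e x :: u))
    have hzw' : e (z :: w) = rootPerm e x :: u := by rw [← hzw]; exact e.apply_symm_apply _
    have hcons := he.apply_cons_eq_rootPerm_cons_tail z w
    rw [hzw', List.cons.injEq] at hcons
    obtain rfl : z = x := (rootPerm e).injective hcons.1.symm
    exact ⟨w, by simp [hzw']⟩
  rw [sec, dif_pos ⟨hinj, hsurj⟩]
  rfl

lemma apply_cons (he : IsTreeAut e) (x : Fin k) (w : Word k) :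
    e (x :: w) = rootPerm e x :: sec e x w := by
  rw [he.sec_apply, ← he.apply_cons_eq_rootPerm_cons_tail]

lemma rootPerm_sec_eq_of_apply_cons (he : IsTreeAut e) {x y : Fin k} {f : Equiv.Perm (Word k)}
    (hf : ∀ w, e (x :: w) = y :: f w) : rootPerm e x = y ∧ sec e x = f := by
  have hcons (w) := (he.apply_cons x w).symm.trans (hf w)
  simp only [List.cons.injEq] at hcons
  exact ⟨(hcons []).1, Equiv.ext fun w => (hcons w).2⟩

lemma rootPerm_mul_apply_and_sec_mul (hg : IsTreeAut g) (hh : IsTreeAut h) (x : Fin k) :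
    rootPerm (g * h) x = rootPerm g (rootPerm h x) ∧
      sec (g * h) x = sec g (rootPerm h x) * sec h x :=
  (hg.mul hh).rootPerm_sec_eq_of_apply_cons fun w => by
    rw [Equiv.Perm.mul_apply, hh.apply_cons, hg.apply_cons, Equiv.Perm.mul_apply]

lemma sec_mul (hg : IsTreeAut g) (hh : IsTreeAut h) (x : Fin k) :
    sec (g * h) x = sec g (rootPerm h x) * sec h x :=
  (rootPerm_mul_apply_and_sec_mul hg hh x).2

lemma rootPerm_mul (hg : IsTreeAut g) (hh : IsTreeAut h) :
    rootPerm (g * h) = rootPerm g * rootPerm h :=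
  Equiv.ext fun x => (rootPerm_mul_apply_and_sec_mul hg hh x).1

end IsTreeAut

lemma rootPerm_one : rootPerm (1 : Equiv.Perm (Word k)) = 1 :=
  Equiv.ext fun _ => (IsTreeAut.one.rootPerm_sec_eq_of_apply_cons (f := 1) fun _ => rfl).1

lemma sec_one (x : Fin k) : sec (1 : Equiv.Perm (Word k)) x = 1 :=
  (IsTreeAut.one.rootPerm_sec_eq_of_apply_cons (x := x) (f := 1) fun _ => rfl).2

namespace IsTreeAut

variable {g : Equiv.Perm (Word k)}

lemma rootPerm_inv (hg : IsTreeAut g) : rootPerm g⁻¹ = (rootPerm g)⁻¹ :=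
  (inv_eq_of_mul_eq_one_right (by rw [← hg.rootPerm_mul hg.inv, mul_inv_cancel, rootPerm_one])).symm

lemma sec_inv (hg : IsTreeAut g) (x : Fin k) : sec g⁻¹ x = (sec g (rootPerm g⁻¹ x))⁻¹ :=
  (inv_eq_of_mul_eq_one_right (by rw [← hg.sec_mul hg.inv, mul_inv_cancel, sec_one])).symm

lemma rootPerm_inv_apply_eq_iff (hg : IsTreeAut g) {x y : Fin k} :
    rootPerm g⁻¹ x = y ↔ rootPerm g y = x := by
  rw [hg.rootPerm_inv, Equiv.Perm.inv_eq_iff_eq, eq_comm]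

end IsTreeAut

lemma secW_replicate {g : Equiv.Perm (Word k)} {q : Fin k} (hq : sec g q = g) (m : ℕ) :
    secW g (List.replicate m q) = g := by
  induction m with
  | zero => rfl
  | succ m ih => rwa [List.replicate_succ, secW, hq]

namespace IsHanoiWith

variable {a b : Equiv.Perm (Word k)} {Q : Set (Fin k)}

lemma one : IsHanoiWith (1 : Equiv.Perm (Word k)) Set.univ :=
  ⟨IsTreeAut.one, fun i hi => absurd (Set.mem_univ i) hi, fun j _ => sec_one j,
    fun j _ => by rw [rootPerm_one]; rfl⟩

lemma inv (ha : IsHanoiWith a Q) : IsHanoiWith a⁻¹ Q := by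
  obtain ⟨htree, hactive, hinactive, hfix⟩ := ha
  have hfix' : ∀ j ∈ Q, rootPerm a⁻¹ j = j := fun j hj =>
    htree.rootPerm_inv_apply_eq_iff.mpr (hfix j hj)
  refine ⟨htree.inv, fun i hi => ?_, fun j hj => ?_, hfix'⟩
  · have hi' : rootPerm a⁻¹ i ∉ Q := fun hmem =>
      hi (by rwa [(rootPerm a⁻¹).injective (hfix' _ hmem)] at hmem)
    rw [htree.sec_inv, hactive _ hi', inv_one]
  · rw [htree.sec_inv, hfix' j hj, hinactive j hj]

lemma eq_of_rootPerm_eq (ha : IsHanoiWith a Q) (hb : IsHanoiWith b Q)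
    (hr : rootPerm a = rootPerm b) : a = b := by
  refine Equiv.ext fun v => ?_
  induction v with
  | nil => rw [ha.1.apply_nil, hb.1.apply_nil]
  | cons x w ih =>
    rw [ha.1.apply_cons, hb.1.apply_cons, hr]
    by_cases hx : x ∈ Q
    · rw [ha.2.2.1 x hx, hb.2.2.1 x hx, ih]
    · rw [ha.2.1 x hx, hb.2.1 x hx]

lemma set_eq_of_ne_one (ha1 : a ≠ 1) {Q' : Set (Fin k)} (ha : IsHanoiWith a Q)
    (ha' : IsHanoiWith a Q') : Q = Q' := by
  ext x
  constructor <;> intro hx <;> by_contra hx'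
  · exact ha1 ((ha.2.2.1 x hx).symm.trans (ha'.2.1 x hx'))
  · exact ha1 ((ha'.2.2.1 x hx).symm.trans (ha.2.1 x hx'))

end IsHanoiWith

namespace IsHanoiAut

variable {a : Equiv.Perm (Word k)}

lemma isHanoiWith_inactivePegs (ha : IsHanoiAut a) : IsHanoiWith a (inactivePegs a) := by
  rw [inactivePegs]
  split_ifs with h1 h2
  · exact h1 ▸ IsHanoiWith.one
  · exact h2.choose_spec
  · exact absurd ha h2

lemma isTreeAut (ha : IsHanoiAut a) : IsTreeAut a := ha.isHanoiWith_inactivePegs.1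

lemma inv (ha : IsHanoiAut a) : IsHanoiAut a⁻¹ :=
  ⟨_, ha.isHanoiWith_inactivePegs.inv⟩

lemma inactivePegs_inv (ha : IsHanoiAut a) : inactivePegs a⁻¹ = inactivePegs a := by
  rcases eq_or_ne a 1 with rfl | ha1
  · rw [inv_one]
  · exact IsHanoiWith.set_eq_of_ne_one (inv_ne_one.mpr ha1) ha.inv.isHanoiWith_inactivePegs
      ha.isHanoiWith_inactivePegs.inv

end IsHanoiAut

lemma setOf_isHanoiAut_finite : {a : Equiv.Perm (Word k) | IsHanoiAut a}.Finite := by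
  refine Set.Finite.of_finite_image (f := fun a => (rootPerm a, inactivePegs a))
    (Set.toFinite _) fun a ha b hb hab => ?_
  simp only [Prod.mk.injEq] at hab
  exact IsHanoiWith.eq_of_rootPerm_eq (hab.2 ▸ IsHanoiAut.isHanoiWith_inactivePegs ha)
    (IsHanoiAut.isHanoiWith_inactivePegs hb) hab.1

section Closure

variable {U : Set (Equiv.Perm (Word k))} {g τ : Equiv.Perm (Word k)}

lemma IsHanoiAut.of_mem_union_inv (hU : ∀ a ∈ U, IsHanoiAut a) (hτ : τ ∈ U ∪ U⁻¹) :
    IsHanoiAut τ := by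
  rcases hτ with h | h
  · exact hU τ h
  · simpa using (hU _ h).inv

lemma mem_closure_of_mem_union_inv (hτ : τ ∈ U ∪ U⁻¹) : τ ∈ Subgroup.closure U := by
  rcases hτ with h | h
  · exact Subgroup.subset_closure h
  · simpa using (Subgroup.closure U).inv_mem (Subgroup.subset_closure h)

lemma list_prod_mem_closure {L : List (Equiv.Perm (Word k))} (hL : ∀ τ ∈ L, τ ∈ U ∪ U⁻¹) :
    L.prod ∈ Subgroup.closure U :=
  Subgroup.list_prod_mem _ fun τ hτ => mem_closure_of_mem_union_inv (hL τ hτ)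

lemma exists_list_of_mem_closure (hg : g ∈ Subgroup.closure U) :
    ∃ L : List (Equiv.Perm (Word k)), (∀ τ ∈ L, τ ∈ U ∪ U⁻¹) ∧ L.prod = g := by
  rw [← Subgroup.mem_toSubmonoid, Subgroup.closure_toSubmonoid] at hg
  exact Submonoid.exists_list_of_mem_closure hg

lemma rootPerm_mem_closure_image (hU : ∀ a ∈ U, IsTreeAut a) (hg : g ∈ Subgroup.closure U) :
    rootPerm g ∈ Subgroup.closure (rootPerm '' U) := by
  induction hg using Subgroup.closure_induction with
  | mem a ha => exact Subgroup.subset_closure ⟨a, ha, rfl⟩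
  | one => rw [rootPerm_one]; exact Subgroup.one_mem _
  | mul a b ha hb iha ihb =>
    rw [(IsTreeAut.of_mem_closure hU ha).rootPerm_mul (IsTreeAut.of_mem_closure hU hb)]
    exact Subgroup.mul_mem _ iha ihb
  | inv a ha iha =>
    rw [(IsTreeAut.of_mem_closure hU ha).rootPerm_inv]
    exact Subgroup.inv_mem _ iha

lemma IsHanoiAut.isTreeAut_of_mem_closure (hU : ∀ a ∈ U, IsHanoiAut a)
    (hg : g ∈ Subgroup.closure U) : IsTreeAut g :=
  IsTreeAut.of_mem_closure (fun a ha => (hU a ha).isTreeAut) hg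

lemma sec_eq_self_of_mem_closure (hU : ∀ a ∈ U, IsHanoiAut a) {q : Fin k}
    (hq : ∀ a ∈ U, q ∈ inactivePegs a) (hg : g ∈ Subgroup.closure U) :
    sec g q = g ∧ rootPerm g q = q := by
  induction hg using Subgroup.closure_induction with
  | mem a ha =>
    have ha' := (hU a ha).isHanoiWith_inactivePegs
    exact ⟨ha'.2.2.1 q (hq a ha), ha'.2.2.2 q (hq a ha)⟩
  | one => exact ⟨sec_one q, by rw [rootPerm_one]; rfl⟩
  | mul a b ha hb iha ihb =>
    have hta := IsHanoiAut.isTreeAut_of_mem_closure hU ha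
    have htb := IsHanoiAut.isTreeAut_of_mem_closure hU hb
    rw [hta.sec_mul htb, hta.rootPerm_mul htb, Equiv.Perm.mul_apply, ihb.2, iha.1, iha.2, ihb.1]
    exact ⟨rfl, rfl⟩
  | inv a ha iha =>
    have hta := IsHanoiAut.isTreeAut_of_mem_closure hU ha
    have hfix : rootPerm a⁻¹ q = q := hta.rootPerm_inv_apply_eq_iff.mpr iha.2
    exact ⟨by rw [hta.sec_inv, hfix, iha.1], hfix⟩

end Closure

open Classical in
/-- `sec L.prod x = (secLetters L x).prod` for `L = [s_n, …, s_1]`: the letter `s_i` survives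
iff `s_{i-1} ⋯ s_1` moves `x` to an inactive peg of `s_i`. -/
noncomputable def secLetters : List (Equiv.Perm (Word k)) → Fin k → List (Equiv.Perm (Word k))
  | [], _ => []
  | a :: t, x => if rootPerm t.prod x ∈ inactivePegs a then a :: secLetters t x else secLetters t x

section SecLetters

variable {L : List (Equiv.Perm (Word k))} {x : Fin k}

lemma secLetters_sublist (L : List (Equiv.Perm (Word k))) (x : Fin k) :
    (secLetters L x).Sublist L := by
  induction L with
  | nil => exact List.Sublist.slnil
  | cons a t ih =>
    rw [secLetters]
    split_ifs
    exacts [ih.cons_cons a, ih.cons a]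

lemma sec_list_prod (hL : ∀ τ ∈ L, IsHanoiAut τ) (x : Fin k) :
    sec L.prod x = (secLetters L x).prod := by
  induction L with
  | nil => exact sec_one x
  | cons a t ih =>
    have ha := (hL a List.mem_cons_self).isHanoiWith_inactivePegs
    have ht : ∀ τ ∈ t, IsHanoiAut τ := fun τ hτ => hL τ (List.mem_cons_of_mem a hτ)
    have htree : IsTreeAut t.prod := IsHanoiAut.isTreeAut_of_mem_closure (U := {τ | τ ∈ t}) ht
      (list_prod_mem_closure fun τ hτ => Or.inl hτ)
    rw [List.prod_cons, ha.1.sec_mul htree, ih ht, secLetters]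
    split_ifs with h
    · rw [ha.2.2.1 _ h, List.prod_cons]
    · rw [ha.2.1 _ h, one_mul]

lemma length_secLetters_lt (hL : ∀ τ ∈ L, IsHanoiAut τ) (hx : ∃ τ ∈ L, x ∉ inactivePegs τ) :
    (secLetters L x).length < L.length := by
  induction L with
  | nil => simp at hx
  | cons a t ih =>
    have ht : ∀ τ ∈ t, IsHanoiAut τ := fun τ hτ => hL τ (List.mem_cons_of_mem a hτ)
    by_cases htx : ∃ τ ∈ t, x ∉ inactivePegs τ
    · have := ih ht htx
      rw [secLetters]
      split_ifs <;> simp only [List.length_cons] <;> omega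
    · push Not at htx
      have hfix : rootPerm t.prod x = x :=
        (sec_eq_self_of_mem_closure (U := {τ | τ ∈ t}) ht htx
          (list_prod_mem_closure fun τ hτ => Or.inl hτ)).2
      have hax : x ∉ inactivePegs a := by
        obtain ⟨τ, hτ, hτx⟩ := hx
        rcases List.mem_cons.mp hτ with rfl | hτt
        exacts [hτx, absurd (htx τ hτt) hτx]
      rw [secLetters, hfix, if_neg hax, List.length_cons]
      exact Nat.lt_succ_of_le (secLetters_sublist t x).length_le

lemma exists_suffix_of_mem_secLetters {b : Equiv.Perm (Word k)} (hb : b ∈ secLetters L x) :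
    ∃ t, t <:+ L ∧ rootPerm t.prod x ∈ inactivePegs b := by
  induction L with
  | nil => simp [secLetters] at hb
  | cons a t ih =>
    rw [secLetters] at hb
    split_ifs at hb with h
    · rcases List.mem_cons.mp hb with rfl | hb
      · exact ⟨t, List.suffix_cons b t, h⟩
      · obtain ⟨t', ht', h'⟩ := ih hb
        exact ⟨t', ht'.trans (List.suffix_cons a t), h'⟩
    · obtain ⟨t', ht', h'⟩ := ih hb
      exact ⟨t', ht'.trans (List.suffix_cons a t), h'⟩

end SecLetters

section Sufficiency

variable {S : Set (Equiv.Perm (Word k))} {U : Finset (Equiv.Perm (Word k))}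

lemma orbT_subset_singleton {x : Fin k} (hx : x ∈ fixT U) : orbT U x ⊆ {x} := by
  rintro _ ⟨σ, rfl⟩
  have hle : Subgroup.closure ((fun a => rootPerm a) '' (U : Set (Equiv.Perm (Word k)))) ≤
      MulAction.stabilizer _ x :=
    (Subgroup.closure_le _).mpr (by rintro _ ⟨s, hs, rfl⟩; exact hx s hs)
  exact hle σ.2

open Classical in
lemma sec_mem_closure_filter (hU : ∀ a ∈ (U : Set (Equiv.Perm (Word k))), IsHanoiAut a)
    {g : Equiv.Perm (Word k)} (hg : g ∈ Subgroup.closure (U : Set (Equiv.Perm (Word k))))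
    (x : Fin k) :
    sec g x ∈ Subgroup.closure
      (U.filter fun s => (orbT U x ∩ inactivePegs s).Nonempty : Set (Equiv.Perm (Word k))) := by
  obtain ⟨L, hL, rfl⟩ := exists_list_of_mem_closure hg
  rw [sec_list_prod fun τ hτ => IsHanoiAut.of_mem_union_inv hU (hL τ hτ)]
  refine Subgroup.list_prod_mem _ fun b hb => mem_closure_of_mem_union_inv ?_
  obtain ⟨t, ht, hbt⟩ := exists_suffix_of_mem_secLetters hb
  have horb : rootPerm t.prod x ∈ orbT U x :=
    ⟨⟨_, rootPerm_mem_closure_image (fun a ha => (hU a ha).isTreeAut)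
      (list_prod_mem_closure fun τ hτ => hL τ (ht.subset hτ))⟩, rfl⟩
  rcases hL b ((secLetters_sublist L x).subset hb) with h | h
  · exact Or.inl (Finset.mem_filter.mpr ⟨h, _, horb, hbt⟩)
  · refine Or.inr (Finset.mem_filter.mpr ⟨h, _, horb, ?_⟩)
    rwa [← inv_inv b, (hU _ h).inactivePegs_inv] at hbt

open Classical in
lemma filter_orbT_inter_nonempty_ssubset (hCS : CondStar S)
    (hUS : (U : Set (Equiv.Perm (Word k))) ⊆ S) (hE : (⋂ s ∈ U, inactivePegs s).Nonempty)
    {x : Fin k} (hx : x ∉ ⋂ s ∈ U, inactivePegs s) :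
    U.filter (fun s => (orbT U x ∩ inactivePegs s).Nonempty) ⊂ U := by
  rw [Finset.filter_ssubset]
  by_cases hfix : x ∈ fixT U
  · obtain ⟨s, hs, hxs⟩ : ∃ s ∈ U, x ∉ inactivePegs s := by simpa using hx
    refine ⟨s, hs, fun ⟨y, hy, hys⟩ => hxs ?_⟩
    rwa [Set.mem_singleton_iff.mp (orbT_subset_singleton hfix hy)] at hys
  · obtain ⟨s, hs, hempty⟩ := hCS U hUS hE x hfix
    exact ⟨s, hs, by rw [hempty]; exact Set.not_nonempty_empty⟩

lemma IsTreeAut.eq_of_rootPerm_eq_of_sec_eq {E : Set (Fin k)} {g g' : Equiv.Perm (Word k)}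
    (hg : IsTreeAut g) (hg' : IsTreeAut g') (hroot : rootPerm g = rootPerm g')
    (hE : ∀ x ∈ E, sec g x = g ∧ sec g' x = g') (hsec : ∀ x ∉ E, sec g x = sec g' x) :
    g = g' := by
  refine Equiv.ext fun v => ?_
  induction v with
  | nil => rw [hg.apply_nil, hg'.apply_nil]
  | cons x w ih =>
    rw [hg.apply_cons, hg'.apply_cons, hroot]
    by_cases hx : x ∈ E
    · rw [(hE x hx).1, (hE x hx).2, ih]
    · rw [hsec x hx]

theorem closure_finite_of_condStar (hS : ∀ a ∈ S, IsHanoiAut a) (hCS : CondStar S)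
    (U : Finset (Equiv.Perm (Word k))) (hUS : (U : Set (Equiv.Perm (Word k))) ⊆ S)
    (hE : (⋂ s ∈ U, inactivePegs s).Nonempty) :
    (Subgroup.closure (U : Set (Equiv.Perm (Word k))) : Set (Equiv.Perm (Word k))).Finite := by
  classical
  induction U using Finset.strongInduction with
  | H U ih =>
  set E := ⋂ s ∈ U, inactivePegs s
  have hU : ∀ a ∈ (U : Set (Equiv.Perm (Word k))), IsHanoiAut a := fun a ha => hS a (hUS ha)
  let V : Fin k → Finset (Equiv.Perm (Word k)) := fun x =>
    U.filter fun s => (orbT U x ∩ inactivePegs s).Nonempty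
  have hVfin (x : {x // x ∉ E}) :
      (Subgroup.closure (V x : Set (Equiv.Perm (Word k))) : Set (Equiv.Perm (Word k))).Finite :=
    ih _ (filter_orbT_inter_nonempty_ssubset hCS hUS hE x.2)
      ((Finset.coe_subset.mpr (Finset.filter_subset _ _)).trans hUS)
      (hE.mono (Set.biInter_subset_biInter_left (Finset.coe_subset.mpr (Finset.filter_subset _ _))))
  refine Set.Finite.of_finite_image (f := fun g => (rootPerm g, fun x : {x // x ∉ E} => sec g x))
    ((Set.finite_univ.prod (Set.Finite.pi hVfin)).subset ?_) fun g hg g' hg' hgg' => ?_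
  · rintro _ ⟨g, hg, rfl⟩
    exact ⟨Set.mem_univ _, fun x _ => sec_mem_closure_filter hU hg x⟩
  · simp only [Prod.mk.injEq, funext_iff] at hgg'
    have hfix {g} (hg : g ∈ Subgroup.closure (U : Set (Equiv.Perm (Word k)))) (x) (hx : x ∈ E) :=
      (sec_eq_self_of_mem_closure hU (Set.mem_iInter₂.mp hx) hg).1
    exact IsTreeAut.eq_of_rootPerm_eq_of_sec_eq (IsHanoiAut.isTreeAut_of_mem_closure hU hg)
      (IsHanoiAut.isTreeAut_of_mem_closure hU hg') hgg'.1
      (fun x hx => ⟨hfix hg x hx, hfix hg' x hx⟩) fun x hx => hgg'.2 ⟨x, hx⟩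

lemma secW_mem_closure {U : Finset (Equiv.Perm (Word k))}
    (hU : ∀ a ∈ (U : Set (Equiv.Perm (Word k))), IsHanoiAut a) {g : Equiv.Perm (Word k)}
    (hg : g ∈ Subgroup.closure (U : Set (Equiv.Perm (Word k)))) (v : Word k) :
    secW g v ∈ Subgroup.closure (U : Set (Equiv.Perm (Word k))) := by
  classical
  induction v generalizing g with
  | nil => exact hg
  | cons x w ih =>
    exact ih (Subgroup.closure_mono (Finset.coe_subset.mpr (Finset.filter_subset _ _))
      (sec_mem_closure_filter hU hg x))

def essClosureUnion (S : Set (Equiv.Perm (Word k))) : Set (Equiv.Perm (Word k)) :=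
  ⋃ (U : Finset (Equiv.Perm (Word k))) (_ : (U : Set (Equiv.Perm (Word k))) ⊆ S ∧
    (⋂ s ∈ U, inactivePegs s).Nonempty), (Subgroup.closure (U : Set (Equiv.Perm (Word k))) : Set _)

lemma essClosureUnion_finite (hS : ∀ a ∈ S, IsHanoiAut a) (hCS : CondStar S) :
    (essClosureUnion S).Finite := by
  have hfin : {U : Finset (Equiv.Perm (Word k)) | (U : Set (Equiv.Perm (Word k))) ⊆ S}.Finite :=
    (setOf_isHanoiAut_finite.subset hS).finite_subsets.preimage Finset.coe_injective.injOn
  exact (hfin.subset fun U hU => hU.1).biUnion fun U hU =>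
    closure_finite_of_condStar hS hCS U hU.1 hU.2

lemma essClosureUnion_subset_closure : essClosureUnion S ⊆ Subgroup.closure S :=
  Set.iUnion₂_subset fun _ hU => Subgroup.closure_mono hU.1

lemma exists_secW_mem_essClosureUnion (hS : ∀ a ∈ S, IsHanoiAut a)
    (L : List (Equiv.Perm (Word k))) (hL : ∀ τ ∈ L, τ ∈ S ∪ S⁻¹) :
    ∃ m, ∀ v : Word k, m ≤ v.length → secW L.prod v ∈ essClosureUnion S := by
  classical
  induction hn : L.length using Nat.strong_induction_on generalizing L with
  | _ n ih =>
  have hLH : ∀ τ ∈ L, IsHanoiAut τ := fun τ hτ => IsHanoiAut.of_mem_union_inv hS (hL τ hτ)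
  by_cases hE : ∃ q, ∀ τ ∈ L, q ∈ inactivePegs τ
  · obtain ⟨q, hq⟩ := hE
    let U := (setOf_isHanoiAut_finite.subset hS).toFinset.filter fun s => s ∈ L ∨ s⁻¹ ∈ L
    have hUS : (U : Set (Equiv.Perm (Word k))) ⊆ S := fun s hs => by
      simpa using (Finset.mem_filter.mp hs).1
    have hUq : q ∈ ⋂ s ∈ U, inactivePegs s := Set.mem_iInter₂.mpr fun s hs => by
      rcases (Finset.mem_filter.mp hs).2 with h | h
      · exact hq s h
      · rw [← (hS s (hUS hs)).inactivePegs_inv]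
        exact hq _ h
    have hLU : L.prod ∈ Subgroup.closure (U : Set (Equiv.Perm (Word k))) :=
      list_prod_mem_closure fun τ hτ => by
        rcases hL τ hτ with h | h
        · exact Or.inl (by simp [U, h, hτ])
        · exact Or.inr (by simp [U, Set.mem_inv.mp h, hτ])
    exact ⟨0, fun v _ => Set.mem_biUnion (x := U) ⟨hUS, q, hUq⟩
      (secW_mem_closure (fun a ha => hS a (hUS ha)) hLU v)⟩
  · push Not at hE
    have hrec (x : Fin k) : ∃ m, ∀ v : Word k, m ≤ v.length →
        secW (secLetters L x).prod v ∈ essClosureUnion S :=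
      ih _ (hn ▸ length_secLetters_lt hLH (hE x)) _
        (fun τ hτ => hL τ ((secLetters_sublist L x).subset hτ)) rfl
    choose m hm using hrec
    refine ⟨Finset.univ.sup m + 1, fun v hv => ?_⟩
    obtain ⟨x, w, rfl⟩ := List.exists_cons_of_length_pos (by omega : 0 < v.length)
    rw [secW, sec_list_prod hLH]
    exact hm x w (by simpa using (Finset.le_sup (Finset.mem_univ x)).trans (by simpa using hv))

theorem isContracting_of_condStar (hS : ∀ a ∈ S, IsHanoiAut a) (hCS : CondStar S) :
    IsContracting (Subgroup.closure S) := by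
  refine ⟨essClosureUnion S, essClosureUnion_finite hS hCS, essClosureUnion_subset_closure,
    fun g hg => ?_⟩
  obtain ⟨L, hL, rfl⟩ := exists_list_of_mem_closure hg
  exact exists_secW_mem_essClosureUnion hS L hL

end Sufficiency

section Necessity

variable {G : Subgroup (Equiv.Perm (Word k))}

def CleanMove (G : Subgroup (Equiv.Perm (Word k))) (p p' : Fin k) : Prop :=
  ∃ ρ ∈ G, IsTreeAut ρ ∧ rootPerm ρ p = p' ∧ sec ρ p = 1

namespace CleanMove

variable {p p' p'' : Fin k}

lemma refl (p : Fin k) : CleanMove G p p :=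
  ⟨1, G.one_mem, IsTreeAut.one, by rw [rootPerm_one]; rfl, sec_one p⟩

lemma trans (h : CleanMove G p p') (h' : CleanMove G p' p'') : CleanMove G p p'' := by
  obtain ⟨ρ, hρG, hρ, hr, hs⟩ := h
  obtain ⟨ρ', hρG', hρ', hr', hs'⟩ := h'
  refine ⟨ρ' * ρ, G.mul_mem hρG' hρG, hρ'.mul hρ, ?_, ?_⟩
  · rw [hρ'.rootPerm_mul hρ, Equiv.Perm.mul_apply, hr, hr']
  · rw [hρ'.sec_mul hρ, hr, hs, hs', one_mul]

lemma symm (h : CleanMove G p p') : CleanMove G p' p := by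
  obtain ⟨ρ, hρG, hρ, hr, hs⟩ := h
  have hr' : rootPerm ρ⁻¹ p' = p := hρ.rootPerm_inv_apply_eq_iff.mpr hr
  exact ⟨ρ⁻¹, G.inv_mem hρG, hρ.inv, hr', by rw [hρ.sec_inv, hr', hs, inv_one]⟩

end CleanMove

lemma IsHanoiAut.cleanMove {s : Equiv.Perm (Word k)} (hs : IsHanoiAut s) (hsG : s ∈ G)
    (y : Fin k) : CleanMove G y (rootPerm s y) := by
  have hs' := hs.isHanoiWith_inactivePegs
  by_cases hy : y ∈ inactivePegs s
  · rw [hs'.2.2.2 y hy]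
    exact CleanMove.refl y
  · exact ⟨s, hsG, hs.isTreeAut, rfl, hs'.2.1 y hy⟩

/-- The group `G_p|_p` of sections at `p` of the elements of `G` fixing `p`. -/
def stabSections (G : Subgroup (Equiv.Perm (Word k))) (p : Fin k) :
    Subgroup (Equiv.Perm (Word k)) where
  carrier := {g | ∃ h ∈ G, IsTreeAut h ∧ rootPerm h p = p ∧ sec h p = g}
  mul_mem' := by
    rintro _ _ ⟨h, hG, ht, hr, rfl⟩ ⟨h', hG', ht', hr', rfl⟩
    refine ⟨h * h', G.mul_mem hG hG', ht.mul ht', ?_, ?_⟩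
    · rw [ht.rootPerm_mul ht', Equiv.Perm.mul_apply, hr', hr]
    · rw [ht.sec_mul ht', hr']
  one_mem' := ⟨1, G.one_mem, IsTreeAut.one, by rw [rootPerm_one]; rfl, sec_one p⟩
  inv_mem' := by
    rintro _ ⟨h, hG, ht, hr, rfl⟩
    have hr' : rootPerm h⁻¹ p = p := ht.rootPerm_inv_apply_eq_iff.mpr hr
    exact ⟨h⁻¹, G.inv_mem hG, ht.inv, hr', by rw [ht.sec_inv, hr']⟩

lemma IsHanoiAut.mem_stabSections {s : Equiv.Perm (Word k)} (hs : IsHanoiAut s) (hsG : s ∈ G)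
    {d : Fin k} (hd : d ∈ inactivePegs s) : s ∈ stabSections G d :=
  have hs' := hs.isHanoiWith_inactivePegs
  ⟨s, hsG, hs.isTreeAut, hs'.2.2.2 d hd, hs'.2.2.1 d hd⟩

lemma CleanMove.stabSections_le {p d : Fin k} (h : CleanMove G p d) :
    stabSections G d ≤ stabSections G p := by
  rintro _ ⟨g, hgG, hg, hgr, rfl⟩
  obtain ⟨ρ', hρG', hρ', hr', hs'⟩ := h.symm
  obtain ⟨ρ, hρG, hρ, hr, hs⟩ := h
  refine ⟨ρ' * (g * ρ), G.mul_mem hρG' (G.mul_mem hgG hρG), hρ'.mul (hg.mul hρ), ?_, ?_⟩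
  · simp only [hρ'.rootPerm_mul (hg.mul hρ), hg.rootPerm_mul hρ, Equiv.Perm.mul_apply, hr, hgr,
      hr']
  · rw [hρ'.sec_mul (hg.mul hρ), hg.sec_mul hρ, hg.rootPerm_mul hρ, Equiv.Perm.mul_apply, hr,
      hgr, hs, hs', one_mul, mul_one]

variable {T : Finset (Equiv.Perm (Word k))}

lemma cleanMove_of_mem_orbT (hT : ∀ a ∈ (T : Set (Equiv.Perm (Word k))), IsHanoiAut a)
    {j p : Fin k} (hp : p ∈ orbT T j) :
    CleanMove (Subgroup.closure (T : Set (Equiv.Perm (Word k)))) j p := by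
  have key (σ) (hσ : σ ∈ Subgroup.closure
      ((fun a => rootPerm a) '' (T : Set (Equiv.Perm (Word k))))) (y : Fin k) :
      CleanMove (Subgroup.closure (T : Set (Equiv.Perm (Word k)))) y (σ y) := by
    induction hσ using Subgroup.closure_induction generalizing y with
    | mem _ hσ =>
      obtain ⟨s, hs, rfl⟩ := hσ
      exact (hT s hs).cleanMove (Subgroup.subset_closure hs) y
    | one => exact CleanMove.refl y
    | mul σ τ _ _ ihσ ihτ => exact (ihτ y).trans (ihσ (τ y))
    | inv σ _ ih => simpa using (ih (σ⁻¹ y)).symm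
  obtain ⟨σ, rfl⟩ := hp
  exact key σ σ.2 j

lemma closure_le_stabSections (hT : ∀ a ∈ (T : Set (Equiv.Perm (Word k))), IsHanoiAut a)
    {j p : Fin k} (hno : ∀ s ∈ T, (orbT T j ∩ inactivePegs s).Nonempty) (hp : p ∈ orbT T j) :
    Subgroup.closure (T : Set (Equiv.Perm (Word k))) ≤
      stabSections (Subgroup.closure (T : Set (Equiv.Perm (Word k)))) p := by
  refine (Subgroup.closure_le _).mpr fun s hs => ?_
  obtain ⟨d, hd, hds⟩ := hno s hs
  have hpd := (cleanMove_of_mem_orbT hT hp).symm.trans (cleanMove_of_mem_orbT hT hd)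
  exact hpd.stabSections_le ((hT s hs).mem_stabSections (Subgroup.subset_closure hs) hds)

/-- The induction step uses that every element of `⟨T⟩` is the section at `x` of an element of
`⟨T⟩` fixing `x` (`closure_le_stabSections`). -/
lemma exists_mem_closure_apply_eq (hT : ∀ a ∈ (T : Set (Equiv.Perm (Word k))), IsHanoiAut a)
    {j : Fin k} (hno : ∀ s ∈ T, (orbT T j ∩ inactivePegs s).Nonempty) (w u : Word k)
    (hwu : w.length = u.length) (hw : ∀ x ∈ w, x ∈ orbT T j) (hu : ∀ y ∈ u, y ∈ orbT T j) :
    ∃ h ∈ Subgroup.closure (T : Set (Equiv.Perm (Word k))), h w = u := by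
  induction w generalizing u with
  | nil => exact ⟨1, Subgroup.one_mem _, (List.length_eq_zero_iff.mp hwu.symm).symm⟩
  | cons x w ih =>
    obtain ⟨y, u, rfl⟩ := List.exists_cons_of_length_eq_add_one hwu.symm
    obtain ⟨g, hg, hgw⟩ := ih u (by simpa using hwu) (fun x hx => hw x (List.mem_cons_of_mem _ hx))
      (fun y hy => hu y (List.mem_cons_of_mem _ hy))
    have hx := hw x List.mem_cons_self
    obtain ⟨h, hh, hht, hhr, hhs⟩ := closure_le_stabSections hT hno hx hg
    obtain ⟨ρ, hρ, hρt, hρr, hρs⟩ :=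
      (cleanMove_of_mem_orbT hT hx).symm.trans (cleanMove_of_mem_orbT hT (hu y List.mem_cons_self))
    refine ⟨ρ * h, Subgroup.mul_mem _ hρ hh, ?_⟩
    rw [Equiv.Perm.mul_apply, hht.apply_cons, hhr, hhs, hgw, hρt.apply_cons, hρr, hρs]
    rfl

lemma closure_infinite (hT : ∀ a ∈ (T : Set (Equiv.Perm (Word k))), IsHanoiAut a) {j : Fin k}
    (hj : j ∉ fixT T) (hno : ∀ s ∈ T, (orbT T j ∩ inactivePegs s).Nonempty) :
    (Subgroup.closure (T : Set (Equiv.Perm (Word k))) : Set (Equiv.Perm (Word k))).Infinite := by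
  intro hfin
  have := hfin.to_subtype
  obtain ⟨s, hs, hsj⟩ : ∃ s ∈ T, rootPerm s j ≠ j := by simpa [fixT] using hj
  have hj' : rootPerm s j ∈ orbT T j := ⟨⟨_, Subgroup.subset_closure ⟨s, hs, rfl⟩⟩, rfl⟩
  set n := Nat.card (Subgroup.closure (T : Set (Equiv.Perm (Word k))))
  let word (f : Fin n → Bool) : Word k := List.ofFn fun i => if f i then j else rootPerm s j
  have hword : Function.Injective word := fun f f' hff' => funext fun i => by
    have := congrFun (List.ofFn_injective hff') i
    revert this
    cases f i <;> cases f' i <;> simp [hsj, Ne.symm hsj]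
  have hex (f : Fin n → Bool) :
      ∃ h ∈ Subgroup.closure (T : Set (Equiv.Perm (Word k))), h (List.replicate n j) = word f :=
    exists_mem_closure_apply_eq hT hno _ _ (by simp [word])
      (fun x hx => List.eq_of_mem_replicate hx ▸ MulAction.mem_orbit_self j)
      (fun y hy => by
        obtain ⟨i, rfl⟩ := List.mem_ofFn.mp hy
        split_ifs
        exacts [MulAction.mem_orbit_self j, hj'])
  choose h hh happ using hex
  have hinj : Function.Injective fun f => (⟨h f, hh f⟩ : Subgroup.closure _) :=
    fun f f' hff' => by
      have hhf : h f = h f' := congrArg Subtype.val hff'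
      exact hword (by rw [← happ, ← happ f', hhf])
  have hcard := Nat.card_le_card_of_injective _ hinj
  simp only [Nat.card_eq_fintype_card, Fintype.card_fun, Fintype.card_bool,
    Fintype.card_fin] at hcard
  exact Nat.lt_two_pow_self.not_ge hcard

end Necessity

lemma finite_of_isContracting {G H : Subgroup (Equiv.Perm (Word k))} (hG : IsContracting G)
    (hHG : H ≤ G) {q : Fin k} (hq : ∀ h ∈ H, sec h q = h) :
    (H : Set (Equiv.Perm (Word k))).Finite := by
  obtain ⟨N, hN, -, hcap⟩ := hG
  refine hN.subset fun h hh => ?_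
  obtain ⟨m, hm⟩ := hcap h (hHG hh)
  simpa [secW_replicate (hq h hh)] using hm (List.replicate m q) (by simp)

theorem condStar_of_isContracting {S : Set (Equiv.Perm (Word k))} (hS : ∀ a ∈ S, IsHanoiAut a)
    (hC : IsContracting (Subgroup.closure S)) : CondStar S := by
  intro T hTS hE j hj
  by_contra hno
  push Not at hno
  have hT : ∀ a ∈ (T : Set (Equiv.Perm (Word k))), IsHanoiAut a := fun a ha => hS a (hTS ha)
  obtain ⟨q, hq⟩ := hE
  exact closure_infinite hT hj hno
    (finite_of_isContracting hC (Subgroup.closure_mono hTS)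
      fun h hh => (sec_eq_self_of_mem_closure hT (Set.mem_iInter₂.mp hq) hh).1)

theorem contracting_iff_condStar_general {k : ℕ} (S : Set (Equiv.Perm (Word k)))
    (hS : ∀ a ∈ S, IsHanoiAut a) :
    IsContracting (Subgroup.closure S) ↔ CondStar S :=
  ⟨condStar_of_isContracting hS, isContracting_of_condStar hS⟩

/-- Theorem: contraction is equivalent to condition (*).
A `k`-peg Hanoi group generated by `S` is contracting if and only if `S`
satisfies condition (*). -/
theorem contracting_iff_condStar {k : ℕ} (S : Set (Equiv.Perm (Word k)))
    (hS1 : (1 : Equiv.Perm (Word k)) ∈ S) (hS : ∀ a ∈ S, IsHanoiAut a) :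
    IsContracting (Subgroup.closure S) ↔ CondStar S :=
  contracting_iff_condStar_general S hS

end Hanoi
end

section
/- For all distinct i, j ∈ {0,…,k−1}: F_i(F(E)) ∩ F_j(F(E)) = {q_l : l ∈ {0,…,k−1}, l ≠ i, l ≠ j}. -/
/-!
Write `λ` for barycentric coordinates with respect to `p` and `n = k - 1`. Since `F_a` is affine
and its values on the vertices are known, `λ_a (F_a y) = λ_a y + (1 - λ_a y) / n` and
`λ_l (F_a y) = (1 - λ_a y - λ_l y) / n` for `l ≠ a`. On `E` this means that the cell `F_a(E)`
lies in `{λ_a ≥ 1/n}`, while each other coordinate is at most `1/n` there, with equality only if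
`λ_a y = λ_l y = 0`. So if `F_i y = F_j z` with `y, z ∈ F(E) ⊆ E`, then `λ_j` of that point is
exactly `1/n`, whence `λ_i y = λ_j y = 0`. Writing `y = F_l u` with `u ∈ E`, the first formula
rules out `l ∈ {i, j}`, and the second gives `λ_l u + λ_i u = λ_l u + λ_j u = 1`, so `λ_l u = 1`,
`u = p_l` and the point is `F_i p_l = q_l`.
-/

open Finset Set

namespace HanoiGeo

section AffineSpace

variable {ι P V : Type*} [Fintype ι] [AddCommGroup V] [Module ℝ V] [AddTorsor V P]
  (b : AffineBasis ι ℝ P)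

theorem _root_.AffineBasis.affineMap_apply_eq_sum_coord_mul (f : P →ᵃ[ℝ] ℝ) (x : P) :
    f x = ∑ i, b.coord i x * f (b i) := by
  conv_lhs => rw [← b.affineCombination_coord_eq_self x]
  rw [univ.map_affineCombination _ _ (b.sum_coord_apply_eq_one x),
    univ.affineCombination_eq_linear_combination _ _ (b.sum_coord_apply_eq_one x)]
  rfl

theorem _root_.AffineBasis.coord_centroid_univ_erase [DecidableEq ι] [Nontrivial ι] (i l : ι) :
    b.coord l ((univ.erase i).centroid ℝ b) =
      if l = i then 0 else (Fintype.card ι - 1 : ℝ)⁻¹ := by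
  obtain ⟨j, hji⟩ := exists_ne i
  have hw := (univ.erase i).sum_centroidWeights_eq_one_of_nonempty ℝ ⟨j, by simpa using hji⟩
  rw [centroid_def]
  split_ifs with hli
  · exact b.coord_apply_combination_of_notMem (by simp [hli]) hw
  · rw [b.coord_apply_combination_of_mem (by simp [hli]) hw, centroidWeights_apply,
      card_erase_of_mem (mem_univ i), card_univ, Nat.cast_pred Fintype.card_pos]

end AffineSpace

section ConvexHull

variable {ι V : Type*} [AddCommGroup V] [Module ℝ V] (b : AffineBasis ι ℝ V) {y : V}

theorem _root_.AffineBasis.coord_nonneg_of_mem_convexHull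
    (hy : y ∈ convexHull ℝ (range b)) (l : ι) : 0 ≤ b.coord l y := by
  rw [b.convexHull_eq_nonneg_coord] at hy
  exact hy l

theorem _root_.AffineBasis.sum_coord_le_one_of_mem_convexHull [Fintype ι]
    (hy : y ∈ convexHull ℝ (range b)) (s : Finset ι) : ∑ m ∈ s, b.coord m y ≤ 1 :=
  b.sum_coord_apply_eq_one y ▸ sum_le_sum_of_subset_of_nonneg (subset_univ s)
    fun m _ _ => b.coord_nonneg_of_mem_convexHull hy m

theorem _root_.AffineBasis.eq_of_mem_convexHull_of_coord_eq_one [Fintype ι] [DecidableEq ι]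
    (hy : y ∈ convexHull ℝ (range b)) {l : ι} (hl : b.coord l y = 1) : y = b l := by
  refine b.ext_elem fun m => ?_
  rw [b.coord_apply]
  split_ifs with hml
  · rw [hml, hl]
  · have hpair := b.sum_coord_le_one_of_mem_convexHull hy {l, m}
    rw [sum_pair (Ne.symm hml)] at hpair
    linarith [b.coord_nonneg_of_mem_convexHull hy m]

end ConvexHull

theorem one_le_card_sub_one (ι : Type*) [Fintype ι] [Nontrivial ι] :
    (1 : ℝ) ≤ Fintype.card ι - 1 := by
  have : (2 : ℝ) ≤ Fintype.card ι := by exact_mod_cast Fintype.one_lt_card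
  linarith

section CellMaps

variable {ι V : Type*} [Fintype ι] [DecidableEq ι] [AddCommGroup V] [Module ℝ V]
  {b : AffineBasis ι ℝ V} {F : ι → V →ᵃ[ℝ] V}

def IsCellMaps (b : AffineBasis ι ℝ V) (F : ι → V →ᵃ[ℝ] V) : Prop :=
  ∀ i, F i (b i) = b i ∧ ∀ j, j ≠ i → F i (b j) = (univ.erase j).centroid ℝ b

variable [Nontrivial ι]

theorem IsCellMaps.coord_apply_self (hF : IsCellMaps b F) (a : ι) (y : V) :
    b.coord a (F a y) = b.coord a y + (1 - b.coord a y) / (Fintype.card ι - 1) := by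
  have hv : ∀ m, b.coord a (F a (b m)) =
      (Fintype.card ι - 1 : ℝ)⁻¹ + if m = a then 1 - (Fintype.card ι - 1 : ℝ)⁻¹ else 0 := by
    intro m
    split_ifs with hma
    · rw [hma, (hF a).1, b.coord_apply_eq]; ring
    · rw [(hF a).2 m hma, b.coord_centroid_univ_erase, if_neg (Ne.symm hma), add_zero]
  rw [show b.coord a (F a y) = ((b.coord a).comp (F a)) y from rfl,
    b.affineMap_apply_eq_sum_coord_mul]
  simp only [AffineMap.coe_comp, Function.comp_apply, hv, mul_add, sum_add_distrib, ← sum_mul,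
    b.sum_coord_apply_eq_one, mul_ite, mul_zero, sum_ite_eq', Finset.mem_univ, if_true]
  ring

theorem IsCellMaps.coord_apply_of_ne (hF : IsCellMaps b F) {a l : ι} (hla : l ≠ a) (y : V) :
    b.coord l (F a y) = (1 - b.coord a y - b.coord l y) / (Fintype.card ι - 1) := by
  have hv : ∀ m, b.coord l (F a (b m)) = (Fintype.card ι - 1 : ℝ)⁻¹ -
      (if m = a then (Fintype.card ι - 1 : ℝ)⁻¹ else 0) -
      if m = l then (Fintype.card ι - 1 : ℝ)⁻¹ else 0 := by
    intro m
    by_cases hma : m = a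
    · rw [hma, (hF a).1, b.coord_apply_ne hla, if_pos rfl, if_neg (Ne.symm hla)]; ring
    · rw [(hF a).2 m hma, b.coord_centroid_univ_erase, if_neg hma]
      by_cases hlm : l = m
      · simp [hlm]
      · simp [hlm, Ne.symm hlm]
  rw [show b.coord l (F a y) = ((b.coord l).comp (F a)) y from rfl,
    b.affineMap_apply_eq_sum_coord_mul]
  simp only [AffineMap.coe_comp, Function.comp_apply, hv, mul_sub, sum_sub_distrib, ← sum_mul,
    b.sum_coord_apply_eq_one, mul_ite, mul_zero, sum_ite_eq', Finset.mem_univ, if_true]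
  ring

theorem IsCellMaps.mapsTo_convexHull (hF : IsCellMaps b F) (a : ι) :
    MapsTo (F a) (convexHull ℝ (range b)) (convexHull ℝ (range b)) := by
  rw [mapsTo_iff_image_subset, AffineMap.image_convexHull, ← range_comp]
  refine convexHull_min (range_subset_iff.mpr fun m => ?_) (convex_convexHull ℝ _)
  by_cases hma : m = a
  · rw [Function.comp_apply, hma, (hF a).1]
    exact subset_convexHull ℝ _ (mem_range_self a)
  · rw [Function.comp_apply, (hF a).2 m hma, centroid_def]
    obtain ⟨l, hlm⟩ := exists_ne m
    refine affineCombination_mem_convexHull (fun _ _ => ?_)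
      ((univ.erase m).sum_centroidWeights_eq_one_of_nonempty ℝ ⟨l, by simpa using hlm⟩)
    rw [centroidWeights_apply]
    positivity

theorem IsCellMaps.inv_le_coord_apply_self (hF : IsCellMaps b F) (a : ι) {y : V}
    (hy : y ∈ convexHull ℝ (range b)) : (Fintype.card ι - 1 : ℝ)⁻¹ ≤ b.coord a (F a y) := by
  have hn := one_le_card_sub_one ι
  have hya := b.coord_nonneg_of_mem_convexHull hy a
  rw [hF.coord_apply_self, inv_eq_one_div, div_le_iff₀ (by linarith), add_mul,
    div_mul_cancel₀ _ (by linarith)]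
  nlinarith

theorem IsCellMaps.coord_eq_zero_of_apply_eq (hF : IsCellMaps b F) {a l : ι} (hal : a ≠ l)
    {y z : V} (hy : y ∈ convexHull ℝ (range b)) (hz : z ∈ convexHull ℝ (range b))
    (h : F a y = F l z) : b.coord a y = 0 ∧ b.coord l y = 0 := by
  have hn := one_le_card_sub_one ι
  have hle := hF.inv_le_coord_apply_self l hz
  rw [← h, hF.coord_apply_of_ne (Ne.symm hal), inv_eq_one_div,
    div_le_div_iff_of_pos_right (by linarith)] at hle
  have hya := b.coord_nonneg_of_mem_convexHull hy a
  have hyl := b.coord_nonneg_of_mem_convexHull hy l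
  constructor <;> linarith

theorem IsCellMaps.apply_eq_of_coord_eq_zero (hF : IsCellMaps b F) {i j l : ι} (hij : i ≠ j)
    {u : V} (hu : u ∈ convexHull ℝ (range b)) (hi : b.coord i (F l u) = 0)
    (hj : b.coord j (F l u) = 0) : l ≠ i ∧ l ≠ j ∧ F l u = b l := by
  have hn := one_le_card_sub_one ι
  have hn0 : (Fintype.card ι - 1 : ℝ) ≠ 0 := by linarith
  have hinv : 0 < (Fintype.card ι - 1 : ℝ)⁻¹ := inv_pos.mpr (by linarith)
  have hself : ∀ m, b.coord m (F l u) = 0 → l ≠ m := by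
    rintro m hm rfl
    linarith [hF.inv_le_coord_apply_self l hu]
  have hli := hself i hi
  have hlj := hself j hj
  rw [hF.coord_apply_of_ne hli.symm, div_eq_zero_iff, or_iff_left hn0] at hi
  rw [hF.coord_apply_of_ne hlj.symm, div_eq_zero_iff, or_iff_left hn0] at hj
  have htriple := b.sum_coord_le_one_of_mem_convexHull hu {l, i, j}
  rw [sum_insert (by simp [hli, hlj]), sum_pair hij] at htriple
  have hlu : b.coord l u = 1 := by linarith [b.coord_nonneg_of_mem_convexHull hu i]
  rw [b.eq_of_mem_convexHull_of_coord_eq_one hu hlu, (hF l).1]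
  exact ⟨hli, hlj, rfl⟩

theorem IsCellMaps.image_iUnion_inter_image_iUnion (hF : IsCellMaps b F) {i j : ι} (hij : i ≠ j) :
    F i '' (⋃ l, F l '' convexHull ℝ (range b)) ∩ F j '' (⋃ l, F l '' convexHull ℝ (range b)) =
      {x | ∃ l, l ≠ i ∧ l ≠ j ∧ x = (univ.erase l).centroid ℝ b} := by
  have hvertex : ∀ l, b l ∈ ⋃ m, F m '' convexHull ℝ (range b) := fun l =>
    mem_iUnion.mpr ⟨l, b l, subset_convexHull ℝ _ (mem_range_self l), (hF l).1⟩
  ext x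
  constructor
  · rintro ⟨⟨y, hy, rfl⟩, z, hz, hzy⟩
    obtain ⟨l, u, hu, rfl⟩ := mem_iUnion.mp hy
    obtain ⟨m, v, hv, rfl⟩ := mem_iUnion.mp hz
    obtain ⟨hi, hj⟩ := hF.coord_eq_zero_of_apply_eq hij (hF.mapsTo_convexHull l hu)
      (hF.mapsTo_convexHull m hv) hzy.symm
    obtain ⟨hli, hlj, hlu⟩ := hF.apply_eq_of_coord_eq_zero hij hu hi hj
    exact ⟨l, hli, hlj, by rw [hlu, (hF i).2 l hli]⟩
  · rintro ⟨l, hli, hlj, rfl⟩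
    exact ⟨⟨b l, hvertex l, (hF i).2 l hli⟩, b l, hvertex l, (hF j).2 l hlj⟩

end CellMaps

theorem cell_intersection_general {k : ℕ}
    (p : Fin k → EuclideanSpace ℝ (Fin (k - 1)))
    (hind : AffineIndependent ℝ p)
    (q : Fin k → EuclideanSpace ℝ (Fin (k - 1)))
    (hq : ∀ i, q i = Finset.centroid ℝ (Finset.univ.erase i) p)
    (F : Fin k → (EuclideanSpace ℝ (Fin (k - 1)) →ᵃ[ℝ] EuclideanSpace ℝ (Fin (k - 1))))
    (hF : ∀ i, F i (p i) = p i ∧ ∀ j, j ≠ i → F i (p j) = q j)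
    (E : Set (EuclideanSpace ℝ (Fin (k - 1))))
    (hE : E = convexHull ℝ (Set.range p))
    (i j : Fin k) (hij : i ≠ j) :
    (F i '' (⋃ l, F l '' E)) ∩ (F j '' (⋃ l, F l '' E)) =
      {x | ∃ l : Fin k, l ≠ i ∧ l ≠ j ∧ x = q l} := by
  have : Nontrivial (Fin k) := nontrivial_of_ne i j hij
  have hcard : Fintype.card (Fin k) = Module.finrank ℝ (EuclideanSpace ℝ (Fin (k - 1))) + 1 := by
    simp only [Fintype.card_fin, finrank_euclideanSpace_fin]
    have := i.pos
    omega
  let b : AffineBasis (Fin k) ℝ (EuclideanSpace ℝ (Fin (k - 1))) :=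
    ⟨p, hind, hind.affineSpan_eq_top_iff_card_eq_finrank_add_one.mpr hcard⟩
  obtain rfl : q = fun l => (univ.erase l).centroid ℝ p := funext hq
  subst hE
  exact IsCellMaps.image_iUnion_inter_image_iUnion (b := b) hF hij

/-- Lemma: intersections of first-level cells.
For distinct `i, j`:
`F_i(F(E)) ∩ F_j(F(E)) = { q_l : l ≠ i, l ≠ j }`, where `E` is the simplex
with vertices `p_0, …, p_{k-1}` and `F(A) = ⋃_l F_l(A)`. -/
theorem cell_intersection {k : ℕ} (hk : 3 ≤ k)
    (p : Fin k → EuclideanSpace ℝ (Fin (k - 1)))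
    (hind : AffineIndependent ℝ p)
    (d : ℝ) (hd : 0 < d) (hdist : ∀ i j, i ≠ j → dist (p i) (p j) = d)
    (q : Fin k → EuclideanSpace ℝ (Fin (k - 1)))
    (hq : ∀ i, q i = Finset.centroid ℝ (Finset.univ.erase i) p)
    (F : Fin k → (EuclideanSpace ℝ (Fin (k - 1)) →ᵃ[ℝ] EuclideanSpace ℝ (Fin (k - 1))))
    (hF : ∀ i, F i (p i) = p i ∧ ∀ j, j ≠ i → F i (p j) = q j)
    (E : Set (EuclideanSpace ℝ (Fin (k - 1))))
    (hE : E = convexHull ℝ (Set.range p))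
    (i j : Fin k) (hij : i ≠ j) :
    (F i '' (⋃ l, F l '' E)) ∩ (F j '' (⋃ l, F l '' E)) =
      {x | ∃ l : Fin k, l ≠ i ∧ l ≠ j ∧ x = q l} :=
  cell_intersection_general p hind q hq F hF E hE i j hij

end HanoiGeo
end

section
/- Two distinct left-infinite sequences w = …x_2x_1 and τ = …y_2y_1 in X_k^{−ω} satisfy π(w) = π(τ) if and only if there exist pairwise distinct i, j, l ∈ X_k and an integer r ≥ 0 such that x_s = y_s for all s ≤ r, {x_{r+1}, y_{r+1}} = {i, j}, and x_s = y_s = l for all s ≥ r+2. (Consequently the quotient of X_k^{−ω} by the relation identifying such pairs is homeomorphic to K^{(k)}.) -/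
/-!
In barycentric coordinates with respect to the simplex `p`, the maps are explicit:
`(k - 1) (F_i z)_i = (k - 2) z_i + 1` and `(k - 1) (F_i z)_m = 1 - z_m - z_i` for `m ≠ i`.
Hence every `F_i` is injective with unique fixed point `p_i`, and comparing the smallest
coordinate on `K` with that of its preimage shows that `K` lies in the simplex. There, the
`i`- and `j`-coordinates of `F_i a = F_j c` (`i ≠ j`) force `a_i = a_j = c_i = c_j = 0`, so
`a = c` is a vertex `p_l` with `l ∉ {i, j}`; and `p_l` has the single address `… l l`. So after the
longest common prefix (cancelled by injectivity) two sequences with the same image must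
look like `… l l i` and `… l l j`, and conversely these both map to `q_l`.
-/

namespace HanoiGeo

/-- The `m`-th level cell `F_{x_1}(F_{x_2}( … F_{x_m}(K) … ))` determined by a
left-infinite sequence `… x_2 x_1` over `Fin k` (encoded as `x : ℕ → Fin k`
with `x s = x_{s+1}`); so `cells F K x m = (F_{x_m} ∘ ⋯ ∘ F_{x_1})`-image of
`K` in the sense of the paper, and these sets are nested in `m`. -/
def cells {k d : ℕ} (F : Fin k → (EuclideanSpace ℝ (Fin d) →ᵃ[ℝ] EuclideanSpace ℝ (Fin d)))
    (K : Set (EuclideanSpace ℝ (Fin d))) : (ℕ → Fin k) → ℕ → Set (EuclideanSpace ℝ (Fin d))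
  | _, 0 => K
  | x, m + 1 => F (x 0) '' cells F K (fun n => x (n + 1)) m

end HanoiGeo

open Finset

namespace AffineBasis

variable {ι V P : Type*} [Fintype ι] [AddCommGroup V] [Module ℝ V] [AddTorsor V P]
  (b : AffineBasis ι ℝ P)

theorem apply_eq_sum_coord_mul (g : P →ᵃ[ℝ] ℝ) (z : P) :
    g z = ∑ j, b.coord j z * g (b j) := by
  have hw := b.sum_coord_apply_eq_one z
  conv_lhs => rw [← b.affineCombination_coord_eq_self z]
  rw [map_affineCombination _ _ _ hw, affineCombination_eq_linear_combination _ _ _ hw]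
  simp [smul_eq_mul]

theorem eq_of_coord_eq_one {c : ι} {u : P} (hu : ∀ m, 0 ≤ b.coord m u)
    (hc : b.coord c u = 1) : u = b c := by
  classical
  have hrest : ∑ m ∈ univ.erase c, b.coord m u = 0 := by
    have := add_sum_erase univ (fun m => b.coord m u) (mem_univ c)
    rw [b.sum_coord_apply_eq_one, hc] at this
    linarith
  refine b.ext_elem fun m => ?_
  rcases eq_or_ne m c with rfl | hmc
  · rw [hc, b.coord_apply_eq]
  · rw [b.coord_apply_ne hmc]
    exact (sum_eq_zero_iff_of_nonneg fun m _ => hu m).1 hrest m (mem_erase.2 ⟨hmc, mem_univ m⟩)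

theorem coord_centroid_erase_of_ne [DecidableEq ι] {m j : ι} (hmj : m ≠ j) :
    b.coord m ((univ.erase j).centroid ℝ b) = ((Fintype.card ι : ℝ) - 1)⁻¹ := by
  rw [b.coord_apply_centroid (mem_erase.2 ⟨hmj, mem_univ m⟩), card_erase_of_mem (mem_univ j),
    card_univ, Nat.cast_sub (Fintype.card_pos_iff.2 ⟨j⟩), Nat.cast_one]

theorem coord_centroid_erase_self [DecidableEq ι] [Nontrivial ι] (j : ι) :
    b.coord j ((univ.erase j).centroid ℝ b) = 0 := by
  obtain ⟨m, hm⟩ := exists_ne j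
  exact b.coord_apply_combination_of_notMem (notMem_erase j univ)
    (sum_centroidWeights_eq_one_of_nonempty ℝ _ ⟨m, mem_erase.2 ⟨hm, mem_univ m⟩⟩)

theorem sum_coord_le_one {u : P} (hu : ∀ m, 0 ≤ b.coord m u) (s : Finset ι) :
    ∑ m ∈ s, b.coord m u ≤ 1 :=
  (sum_le_sum_of_subset_of_nonneg (subset_univ s) fun m _ _ => hu m).trans_eq
    (b.sum_coord_apply_eq_one u)

end AffineBasis

namespace HanoiGeo

variable {ι V P : Type*} [Fintype ι] [DecidableEq ι] [AddCommGroup V] [Module ℝ V]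
  [AddTorsor V P] {b : AffineBasis ι ℝ P} {F : ι → P →ᵃ[ℝ] P}

def IsHanoiSystem (b : AffineBasis ι ℝ P) (F : ι → P →ᵃ[ℝ] P) : Prop :=
  ∀ i, F i (b i) = b i ∧ ∀ j, j ≠ i → F i (b j) = (univ.erase j).centroid ℝ b

namespace IsHanoiSystem

local notation "n" => (Fintype.card ι : ℝ)

theorem coord_map_basis (hF : IsHanoiSystem b F) (i m j : ι) :
    (n - 1) * b.coord m (F i (b j)) =
      1 - b.coord m (b j) - b.coord i (b j) + n * b.coord m (b i) * b.coord i (b j) := by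
  rcases eq_or_ne j i with rfl | hji
  · rw [(hF j).1, b.coord_apply_eq]
    ring
  have : Nontrivial ι := ⟨⟨j, i, hji⟩⟩
  rw [(hF i).2 j hji, b.coord_apply_ne hji.symm]
  rcases eq_or_ne m j with rfl | hmj
  · rw [b.coord_centroid_erase_self, b.coord_apply_eq]
    ring
  · have hn : (n - 1) ≠ 0 := by
      have := Fintype.one_lt_card_iff_nontrivial.2 ‹_›
      have : (1 : ℝ) < n := by exact_mod_cast this
      linarith
    rw [b.coord_centroid_erase_of_ne hmj, b.coord_apply_ne hmj, mul_inv_cancel₀ hn]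
    ring

/- The right side is affine in `z`, so it suffices to check it at the vertices; its last term
merges the cases `m = i` and `m ≠ i`. -/
theorem coord_map (hF : IsHanoiSystem b F) (i m : ι) (z : P) :
    (n - 1) * b.coord m (F i z) =
      1 - b.coord m z - b.coord i z + n * b.coord m (b i) * b.coord i z := by
  calc (n - 1) * b.coord m (F i z)
      = ∑ j, b.coord j z * ((n - 1) * b.coord m (F i (b j))) := by
        rw [← AffineMap.comp_apply (b.coord m), b.apply_eq_sum_coord_mul, mul_sum]
        simp only [AffineMap.comp_apply]
        ring_nf
    _ = ∑ j, b.coord j z *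
          (1 - b.coord m (b j) - b.coord i (b j) + n * b.coord m (b i) * b.coord i (b j)) := by
        simp only [hF.coord_map_basis]
    _ = 1 - b.coord m z - b.coord i z + n * b.coord m (b i) * b.coord i z := by
        rw [b.apply_eq_sum_coord_mul (b.coord m) z, b.apply_eq_sum_coord_mul (b.coord i) z]
        simp only [mul_add, mul_sub, mul_one, sum_add_distrib, sum_sub_distrib,
          b.sum_coord_apply_eq_one]
        rw [mul_sum]
        congr 1
        exact sum_congr rfl fun j _ => by ring

theorem coord_map_self (hF : IsHanoiSystem b F) (i : ι) (z : P) :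
    (n - 1) * b.coord i (F i z) = (n - 2) * b.coord i z + 1 := by
  rw [hF.coord_map, b.coord_apply_eq]
  ring

theorem coord_map_of_ne (hF : IsHanoiSystem b F) {i m : ι} (hmi : m ≠ i) (z : P) :
    (n - 1) * b.coord m (F i z) = 1 - b.coord m z - b.coord i z := by
  rw [hF.coord_map, b.coord_apply_ne hmi]
  ring

theorem injective (hF : IsHanoiSystem b F) (hn : 3 ≤ Fintype.card ι) (i : ι) :
    Function.Injective (F i) := by
  intro a c h
  have hn' : (3 : ℝ) ≤ n := by exact_mod_cast hn
  have hi : b.coord i a = b.coord i c := by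
    have ha := hF.coord_map_self i a
    have hc := hF.coord_map_self i c
    rw [h] at ha
    have : (n - 2) * (b.coord i a - b.coord i c) = 0 := by linarith
    have := (mul_eq_zero.1 this).resolve_left (by linarith)
    linarith
  refine b.ext_elem fun m => ?_
  rcases eq_or_ne m i with rfl | hmi
  · exact hi
  · have ha := hF.coord_map_of_ne hmi a
    have hc := hF.coord_map_of_ne hmi c
    rw [h] at ha
    linarith

theorem eq_of_map_eq_self (hF : IsHanoiSystem b F) {i : ι} {z : P} (hz : F i z = z) :
    z = b i := by
  have hn : (0 : ℝ) < n := by exact_mod_cast Fintype.card_pos_iff.2 ⟨i⟩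
  have hi : b.coord i z = 1 := by
    have := hF.coord_map_self i z
    rw [hz] at this
    linarith
  refine b.ext_elem fun m => ?_
  rcases eq_or_ne m i with rfl | hmi
  · rw [hi, b.coord_apply_eq]
  · have := hF.coord_map_of_ne hmi z
    rw [hz, hi] at this
    rw [b.coord_apply_ne hmi]
    nlinarith

theorem eq_of_map_eq_basis (hF : IsHanoiSystem b F) (hn : 3 ≤ Fintype.card ι) {i m : ι}
    {a : P} (ha : ∀ c, 0 ≤ b.coord c a) (h : F i a = b m) : i = m ∧ a = b m := by
  have him : i = m := by
    by_contra him
    have hn' : (3 : ℝ) ≤ n := by exact_mod_cast hn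
    have := hF.coord_map_of_ne (Ne.symm him) a
    rw [h, b.coord_apply_eq] at this
    linarith [ha m, ha i]
  subst him
  exact ⟨rfl, hF.injective hn i (h.trans (hF i).1.symm)⟩

theorem coord_eq_zero_of_map_eq_map (hF : IsHanoiSystem b F) {i j : ι} (hij : i ≠ j)
    {a c : P} (ha : ∀ m, 0 ≤ b.coord m a) (hc : ∀ m, 0 ≤ b.coord m c) (h : F i a = F j c) :
    b.coord i a = 0 ∧ b.coord j a = 0 := by
  have hn : (2 : ℝ) ≤ n := by exact_mod_cast Fintype.one_lt_card_iff.2 ⟨i, j, hij⟩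
  have e1 := hF.coord_map_of_ne hij.symm a
  have e2 := hF.coord_map_self j c
  rw [h] at e1
  have := mul_nonneg (sub_nonneg.2 hn) (hc j)
  constructor <;> linarith [ha i, ha j]

theorem exists_eq_basis_of_coord_eq_zero (hF : IsHanoiSystem b F) {K : Set P}
    (hKF : K ⊆ ⋃ i, F i '' K) (hK : ∀ u ∈ K, ∀ m, 0 ≤ b.coord m u) {i j : ι} (hij : i ≠ j)
    {a : P} (haK : a ∈ K) (hai : b.coord i a = 0) (haj : b.coord j a = 0) :
    ∃ c, c ≠ i ∧ c ≠ j ∧ a = b c := by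
  obtain ⟨c, u, huK, rfl⟩ := Set.mem_iUnion.1 (hKF haK)
  have hn : (2 : ℝ) ≤ n := by exact_mod_cast Fintype.one_lt_card_iff.2 ⟨i, j, hij⟩
  have hc : 0 < b.coord c (F c u) := by
    have := hF.coord_map_self c u
    nlinarith [hK u huK c]
  have hci : c ≠ i := by rintro rfl; linarith
  have hcj : c ≠ j := by rintro rfl; linarith
  have ei := hF.coord_map_of_ne hci.symm u
  have ej := hF.coord_map_of_ne hcj.symm u
  rw [hai, mul_zero] at ei
  rw [haj, mul_zero] at ej
  have hsum := b.sum_coord_le_one (hK u huK) {i, j, c}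
  rw [sum_insert (by simp [hij, hci.symm]), sum_pair hcj.symm] at hsum
  have huc : b.coord c u = 1 := by linarith [hK u huK i, hK u huK j]
  rw [b.eq_of_coord_eq_one (hK u huK) huc, (hF c).1]
  exact ⟨c, hci, hcj, rfl⟩

theorem exists_eq_basis_of_map_eq_map (hF : IsHanoiSystem b F) {K : Set P}
    (hKF : K ⊆ ⋃ i, F i '' K) (hK : ∀ u ∈ K, ∀ m, 0 ≤ b.coord m u) {i j : ι} (hij : i ≠ j)
    {a c : P} (haK : a ∈ K) (hcK : c ∈ K) (h : F i a = F j c) :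
    ∃ l, l ≠ i ∧ l ≠ j ∧ a = b l ∧ c = b l := by
  obtain ⟨hai, haj⟩ := hF.coord_eq_zero_of_map_eq_map hij (hK a haK) (hK c hcK) h
  obtain ⟨hcj, hci⟩ := hF.coord_eq_zero_of_map_eq_map hij.symm (hK c hcK) (hK a haK) h.symm
  have hac : a = c := b.ext_elem fun m => by
    rcases eq_or_ne m i with rfl | hmi
    · rw [hai, hci]
    rcases eq_or_ne m j with rfl | hmj
    · rw [haj, hcj]
    have ea := hF.coord_map_of_ne hmi a
    have ec := hF.coord_map_of_ne hmj c
    rw [h] at ea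
    linarith
  obtain ⟨l, hli, hlj, rfl⟩ := hF.exists_eq_basis_of_coord_eq_zero hKF hK hij haK hai haj
  exact ⟨l, hli, hlj, rfl, hac.symm⟩

end IsHanoiSystem

section Compact

variable {ι V P : Type*} [Fintype ι] [NormedAddCommGroup V] [NormedSpace ℝ V]
  [FiniteDimensional ℝ V] [MetricSpace P] [NormedAddTorsor V P]

theorem _root_.AffineBasis.exists_forall_coord_le_of_isCompact (b : AffineBasis ι ℝ P)
    {K : Set P} (hK : IsCompact K) (hne : K.Nonempty) :
    ∃ a ∈ K, ∃ m, ∀ u ∈ K, ∀ c, b.coord m a ≤ b.coord c u := by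
  have := b.nonempty
  have hmin : ∀ c, ∃ a ∈ K, IsMinOn (b.coord c) K a := fun c =>
    hK.exists_isMinOn hne (b.coord c).continuous_of_finiteDimensional.continuousOn
  choose a haK ha using hmin
  obtain ⟨m, hm⟩ := Finite.exists_min fun c => b.coord c (a c)
  exact ⟨a m, haK m, m, fun u hu c => (hm c).trans (ha c hu)⟩

variable [DecidableEq ι] {b : AffineBasis ι ℝ P} {F : ι → P →ᵃ[ℝ] P}

local notation "n" => (Fintype.card ι : ℝ)

theorem IsHanoiSystem.coord_nonneg (hF : IsHanoiSystem b F) (hn : 2 ≤ Fintype.card ι)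
    {K : Set P} (hK : IsCompact K) (hKF : K ⊆ ⋃ i, F i '' K) :
    ∀ u ∈ K, ∀ m, 0 ≤ b.coord m u := by
  rcases K.eq_empty_or_nonempty with rfl | hne
  · simp
  obtain ⟨a, haK, m, hmin⟩ := b.exists_forall_coord_le_of_isCompact hK hne
  suffices 0 ≤ b.coord m a from fun u hu c => this.trans (hmin u hu c)
  obtain ⟨i, u, huK, rfl⟩ := Set.mem_iUnion.1 (hKF haK)
  have hn' : (2 : ℝ) ≤ n := by exact_mod_cast hn
  rcases eq_or_ne m i with rfl | hmi
  · have := hF.coord_map_self m u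
    nlinarith [hmin u huK m]
  · have := hF.coord_map_of_ne hmi u
    have hsum : ∑ c ∈ {m, i}, (b.coord c u - b.coord m (F i u)) ≤
        ∑ c, (b.coord c u - b.coord m (F i u)) :=
      sum_le_sum_of_subset_of_nonneg (subset_univ _) fun c _ _ => sub_nonneg.2 (hmin u huK c)
    rw [sum_pair hmi, sum_sub_distrib, b.sum_coord_apply_eq_one, sum_const, card_univ,
      nsmul_eq_mul] at hsum
    linarith

end Compact

section Address

variable {k d : ℕ} {F : Fin k → (EuclideanSpace ℝ (Fin d) →ᵃ[ℝ] EuclideanSpace ℝ (Fin d))}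
  {K : Set (EuclideanSpace ℝ (Fin d))} {proj : (ℕ → Fin k) → EuclideanSpace ℝ (Fin d)}

variable (F K proj) in
def IsCodingMap : Prop :=
  ∀ x, ⋂ m, cells F K x m = {proj x}

theorem proj_mem (hproj : IsCodingMap F K proj) (x : ℕ → Fin k) :
    proj x ∈ K := by
  have : proj x ∈ ⋂ m, cells F K x m := by rw [hproj]; rfl
  exact Set.mem_iInter.1 this 0

theorem proj_eq_map_proj_tail (hproj : IsCodingMap F K proj)
    (hFK : ∀ i, Set.MapsTo (F i) K K) (x : ℕ → Fin k) :
    proj x = F (x 0) (proj fun n => x (n + 1)) := by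
  have htail : proj (fun n => x (n + 1)) ∈ ⋂ m, cells F K (fun n => x (n + 1)) m := by
    rw [hproj]; rfl
  have hmem : F (x 0) (proj fun n => x (n + 1)) ∈ ⋂ m, cells F K x m := by
    refine Set.mem_iInter.2 fun m => ?_
    cases m with
    | zero => exact hFK _ (proj_mem hproj _)
    | succ m => exact Set.mem_image_of_mem _ (Set.mem_iInter.1 htail m)
  rw [hproj] at hmem
  exact hmem.symm

theorem proj_eq_proj_iff_of_eqOn (hproj : IsCodingMap F K proj)
    (hFK : ∀ i, Set.MapsTo (F i) K K) (hinj : ∀ i, Function.Injective (F i)) {r : ℕ}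
    {x y : ℕ → Fin k} (h : ∀ s < r, x s = y s) :
    proj x = proj y ↔ proj (fun n => x (n + r)) = proj (fun n => y (n + r)) := by
  induction r generalizing x y with
  | zero => rfl
  | succ r ih =>
    rw [proj_eq_map_proj_tail hproj hFK x, proj_eq_map_proj_tail hproj hFK y,
      h 0 r.succ_pos, (hinj _).eq_iff]
    exact ih fun s hs => h (s + 1) (by omega)

variable {b : AffineBasis (Fin k) ℝ (EuclideanSpace ℝ (Fin d))}

theorem proj_const (hproj : IsCodingMap F K proj)
    (hFK : ∀ i, Set.MapsTo (F i) K K) (hF : IsHanoiSystem b F) (i : Fin k) :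
    proj (fun _ => i) = b i :=
  hF.eq_of_map_eq_self (proj_eq_map_proj_tail hproj hFK fun _ => i).symm

theorem eq_of_proj_eq_basis (hproj : IsCodingMap F K proj)
    (hFK : ∀ i, Set.MapsTo (F i) K K) (hF : IsHanoiSystem b F) (hn : 3 ≤ k)
    (hK : ∀ u ∈ K, ∀ m, 0 ≤ b.coord m u) {m : Fin k} {z : ℕ → Fin k} (hz : proj z = b m)
    (s : ℕ) : z s = m := by
  have head_and_tail {z : ℕ → Fin k} (hz : proj z = b m) :
      z 0 = m ∧ proj (fun n => z (n + 1)) = b m := by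
    rw [proj_eq_map_proj_tail hproj hFK] at hz
    exact hF.eq_of_map_eq_basis (by simpa using hn) (hK _ (proj_mem hproj _)) hz
  induction s generalizing z with
  | zero => exact (head_and_tail hz).1
  | succ s ih => exact ih (head_and_tail hz).2

theorem proj_eq_proj_iff_of_head_ne (hproj : IsCodingMap F K proj)
    (hFK : ∀ i, Set.MapsTo (F i) K K) (hKF : K ⊆ ⋃ i, F i '' K) (hF : IsHanoiSystem b F)
    (hn : 3 ≤ k) (hK : ∀ u ∈ K, ∀ m, 0 ≤ b.coord m u) {x y : ℕ → Fin k} (h0 : x 0 ≠ y 0) :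
    proj x = proj y ↔ ∃ l, l ≠ x 0 ∧ l ≠ y 0 ∧ ∀ s, x (s + 1) = l ∧ y (s + 1) = l := by
  rw [proj_eq_map_proj_tail hproj hFK x, proj_eq_map_proj_tail hproj hFK y]
  constructor
  · intro h
    obtain ⟨l, hlx, hly, hx, hy⟩ :=
      hF.exists_eq_basis_of_map_eq_map hKF hK h0 (proj_mem hproj _) (proj_mem hproj _) h
    exact ⟨l, hlx, hly, fun s =>
      ⟨eq_of_proj_eq_basis hproj hFK hF hn hK hx s, eq_of_proj_eq_basis hproj hFK hF hn hK hy s⟩⟩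
  · rintro ⟨l, hlx, hly, hl⟩
    have hx : (fun n => x (n + 1)) = fun _ => l := funext fun s => (hl s).1
    have hy : (fun n => y (n + 1)) = fun _ => l := funext fun s => (hl s).2
    rw [hx, hy, proj_const hproj hFK hF, (hF _).2 l hlx, (hF _).2 l hly]

theorem proj_eq_proj_iff_of_first_ne (hproj : IsCodingMap F K proj)
    (hFK : ∀ i, Set.MapsTo (F i) K K) (hKF : K ⊆ ⋃ i, F i '' K) (hF : IsHanoiSystem b F)
    (hn : 3 ≤ k) (hK : ∀ u ∈ K, ∀ m, 0 ≤ b.coord m u) {x y : ℕ → Fin k} {r : ℕ}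
    (hpre : ∀ s < r, x s = y s) (hr : x r ≠ y r) :
    proj x = proj y ↔ ∃ l, l ≠ x r ∧ l ≠ y r ∧ ∀ s, r + 1 ≤ s → x s = l ∧ y s = l := by
  have hinj := hF.injective (by simpa using hn)
  rw [proj_eq_proj_iff_of_eqOn hproj hFK hinj hpre,
    proj_eq_proj_iff_of_head_ne hproj hFK hKF hF hn hK (by simpa using hr)]
  simp only [zero_add]
  refine exists_congr fun l => and_congr_right fun _ => and_congr_right fun _ =>
    ⟨fun h s hs => ?_, fun h s => h _ (by omega)⟩
  obtain ⟨t, rfl⟩ := Nat.exists_eq_add_of_le hs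
  rw [show r + 1 + t = t + 1 + r by omega]
  exact h t

end Address

theorem pi_fiber_characterization_general {k : ℕ} (hk : 3 ≤ k)
    (p : Fin k → EuclideanSpace ℝ (Fin (k - 1)))
    (hind : AffineIndependent ℝ p)
    (q : Fin k → EuclideanSpace ℝ (Fin (k - 1)))
    (hq : ∀ i, q i = Finset.centroid ℝ (Finset.univ.erase i) p)
    (F : Fin k → (EuclideanSpace ℝ (Fin (k - 1)) →ᵃ[ℝ] EuclideanSpace ℝ (Fin (k - 1))))
    (hF : ∀ i, F i (p i) = p i ∧ ∀ j, j ≠ i → F i (p j) = q j)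
    (K : Set (EuclideanSpace ℝ (Fin (k - 1))))
    (hKc : IsCompact K) (hKinv : K = ⋃ i, F i '' K)
    (proj : (ℕ → Fin k) → EuclideanSpace ℝ (Fin (k - 1)))
    (hproj : ∀ x : ℕ → Fin k, (⋂ m : ℕ, cells F K x m) = {proj x})
    (x y : ℕ → Fin k) (hxy : x ≠ y) :
    proj x = proj y ↔
      ∃ i j l : Fin k, i ≠ j ∧ i ≠ l ∧ j ≠ l ∧ ∃ r : ℕ,
        (∀ s, s < r → x s = y s) ∧ ({x r, y r} : Set (Fin k)) = {i, j} ∧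
        ∀ s, r + 1 ≤ s → x s = l ∧ y s = l := by
  have hspan : affineSpan ℝ (Set.range p) = ⊤ := by
    rw [hind.affineSpan_eq_top_iff_card_eq_finrank_add_one, Fintype.card_fin,
      finrank_euclideanSpace_fin]
    omega
  let b : AffineBasis (Fin k) ℝ (EuclideanSpace ℝ (Fin (k - 1))) := ⟨p, hind, hspan⟩
  have hsys : IsHanoiSystem b F := fun i => ⟨(hF i).1, fun j hj => ((hF i).2 j hj).trans (hq j)⟩
  have hFK : ∀ i, Set.MapsTo (F i) K K := fun i a ha => hKinv ▸ Set.mem_iUnion.2 ⟨i, a, ha, rfl⟩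
  have hK := hsys.coord_nonneg (by rw [Fintype.card_fin]; omega) hKc hKinv.subset
  have hfiber r := proj_eq_proj_iff_of_first_ne (x := x) (y := y) (r := r) hproj hFK
    hKinv.subset hsys hk hK
  constructor
  · intro h
    have hex : ∃ r, x r ≠ y r := Function.ne_iff.1 hxy
    obtain ⟨l, hlx, hly, hl⟩ := (hfiber _ (fun s hs => not_not.1 (Nat.find_min hex hs))
      (Nat.find_spec hex)).1 h
    exact ⟨_, _, l, Nat.find_spec hex, hlx.symm, hly.symm, _,
      fun s hs => not_not.1 (Nat.find_min hex hs), rfl, hl⟩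
  · rintro ⟨i, j, l, hij, hil, hjl, r, hpre, hset, htail⟩
    have hr : x r ≠ y r ∧ l ≠ x r ∧ l ≠ y r := by
      rcases Set.pair_eq_pair_iff.1 hset with ⟨hx, hy⟩ | ⟨hx, hy⟩ <;> rw [hx, hy] <;> tauto
    exact (hfiber r hpre hr.1).2 ⟨l, hr.2.1, hr.2.2, htail⟩

/-- fibers of the natural projection `π : X_k^{-ω} → K^{(k)}`.
Two distinct left-infinite sequences have the same image under `π` if and only
if they are of the form `(… l l i v, … l l j v)` with `i, j, l` pairwise
distinct. -/
theorem pi_fiber_characterization {k : ℕ} (hk : 3 ≤ k)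
    (p : Fin k → EuclideanSpace ℝ (Fin (k - 1)))
    (hind : AffineIndependent ℝ p)
    (d : ℝ) (hd : 0 < d) (hdist : ∀ i j, i ≠ j → dist (p i) (p j) = d)
    (q : Fin k → EuclideanSpace ℝ (Fin (k - 1)))
    (hq : ∀ i, q i = Finset.centroid ℝ (Finset.univ.erase i) p)
    (F : Fin k → (EuclideanSpace ℝ (Fin (k - 1)) →ᵃ[ℝ] EuclideanSpace ℝ (Fin (k - 1))))
    (hF : ∀ i, F i (p i) = p i ∧ ∀ j, j ≠ i → F i (p j) = q j)
    (hcontr : ∀ i, ∃ c : NNReal, c < 1 ∧ LipschitzWith c (F i))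
    (K : Set (EuclideanSpace ℝ (Fin (k - 1))))
    (hKne : K.Nonempty) (hKc : IsCompact K) (hKinv : K = ⋃ i, F i '' K)
    (proj : (ℕ → Fin k) → EuclideanSpace ℝ (Fin (k - 1)))
    (hproj : ∀ x : ℕ → Fin k, (⋂ m : ℕ, cells F K x m) = {proj x})
    (x y : ℕ → Fin k) (hxy : x ≠ y) :
    proj x = proj y ↔
      ∃ i j l : Fin k, i ≠ j ∧ i ≠ l ∧ j ≠ l ∧ ∃ r : ℕ,
        (∀ s, s < r → x s = y s) ∧ ({x r, y r} : Set (Fin k)) = {i, j} ∧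
        ∀ s, r + 1 ≤ s → x s = l ∧ y s = l :=
  pi_fiber_characterization_general hk p hind q hq F hF K hKc hKinv proj hproj x y hxy

end HanoiGeo
end
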